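/- arXiv:2011.14397 — 10 statements merged into one kernel-verified Lean document; each statement's English description precedes it below -/
import Mathlib

section
/- Let n ∈ {0,1,2}, γ > 1, and let S : ℝ → ℝ be C¹. If a C² function φ = φ(t,s) with φ > 0 and φ_s > 0 satisfies the Lagrangian gas dynamics equation φ_tt + φ^{n(1−γ)} φ_s^{−γ} ( S'(s) − nγ S(s) φ_s/φ − γ S(s) φ_ss/φ_s ) = 0, then the conservation of energy holds: D_t[ (1/2)φ_t² + (S(s)/(γ−1)) φ^{n(1−γ)} φ_s^{1−γ} ] + D_s[ φ_t S(s) φ^{n(1−γ)} φ_s^{−γ} ] = 0. -/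
/-- Partial derivative with respect to the first argument. -/
noncomputable def pd1 (f : ℝ → ℝ → ℝ) (t s : ℝ) : ℝ := deriv (fun τ => f τ s) t

/-- Partial derivative with respect to the second argument. -/
noncomputable def pd2 (f : ℝ → ℝ → ℝ) (t s : ℝ) : ℝ := deriv (fun σ => f t σ) s

/-- The left-hand side of the Lagrangian gas dynamics equation
`φ_tt + φ^{n(1−γ)} φ_s^{−γ} ( S(s)ʹ − nγ S(s) φ_s/φ − γ S(s) φ_ss/φ_s )`. -/
noncomputable def gasEq (n : ℕ) (γ : ℝ) (S : ℝ → ℝ) (φ : ℝ → ℝ → ℝ) (t s : ℝ) : ℝ :=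
  pd1 (pd1 φ) t s +
    φ t s ^ ((n : ℝ) * (1 - γ)) * pd2 φ t s ^ (-γ) *
      (deriv S s - (n : ℝ) * γ * S s * pd2 φ t s / φ t s
        - γ * S s * pd2 (pd2 φ) t s / pd2 φ t s)

/-- conservation of energy for the Lagrangian gas dynamics equation. -/
theorem conservation_of_energy
    (n : ℕ) (hn : n ∈ ({0, 1, 2} : Set ℕ)) (γ : ℝ) (hγ : 1 < γ)
    (S : ℝ → ℝ) (hS : ContDiff ℝ 1 S)
    (φ : ℝ → ℝ → ℝ) (hφ : ContDiff ℝ 2 (fun q : ℝ × ℝ => φ q.1 q.2))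
    (hφpos : ∀ t s, 0 < φ t s) (hφspos : ∀ t s, 0 < pd2 φ t s)
    (hsol : ∀ t s, gasEq n γ S φ t s = 0) :
    ∀ t s : ℝ,
      pd1 (fun t' s' =>
          (1 / 2) * pd1 φ t' s' ^ 2
            + (S s' / (γ - 1)) * φ t' s' ^ ((n : ℝ) * (1 - γ)) * pd2 φ t' s' ^ (1 - γ)) t s
        + pd2 (fun t' s' =>
            pd1 φ t' s' * S s' * φ t' s' ^ ((n : ℝ) * (1 - γ)) * pd2 φ t' s' ^ (-γ)) t s
        = 0 := by
  intro t s
  set f : ℝ × ℝ → ℝ := fun q => φ q.1 q.2 with hf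
  have hfd : Differentiable ℝ f := hφ.differentiable (by norm_num)
  have hg : ContDiff ℝ 1 (fderiv ℝ f) := hφ.fderiv_right (by norm_num)
  have hgd : Differentiable ℝ (fderiv ℝ f) := hg.differentiable (by norm_num)
  have hline1 : ∀ (t s : ℝ), HasDerivAt (fun τ => ((τ, s) : ℝ × ℝ)) (1, 0) t :=
    fun t s => (hasDerivAt_id t).prodMk (hasDerivAt_const t s)
  have hline2 : ∀ (t s : ℝ), HasDerivAt (fun σ => ((t, σ) : ℝ × ℝ)) (0, 1) s :=
    fun t s => (hasDerivAt_const s t).prodMk (hasDerivAt_id s)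
  have hd1 : ∀ t s : ℝ, HasDerivAt (fun τ => φ τ s) (fderiv ℝ f (t, s) (1, 0)) t :=
    fun t s => by have := (hfd (t, s)).hasFDerivAt.comp_hasDerivAt t (hline1 t s); exact this
  have hd2 : ∀ t s : ℝ, HasDerivAt (fun σ => φ t σ) (fderiv ℝ f (t, s) (0, 1)) s :=
    fun t s => (hfd (t, s)).hasFDerivAt.comp_hasDerivAt s (hline2 t s)
  have hD1 : ∀ t s : ℝ, HasDerivAt (fun τ => fderiv ℝ f (τ, s)) (fderiv ℝ (fderiv ℝ f) (t, s) (1, 0)) t :=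
    fun t s => (hgd (t, s)).hasFDerivAt.comp_hasDerivAt t (hline1 t s)
  have hD2 : ∀ t s : ℝ, HasDerivAt (fun σ => fderiv ℝ f (t, σ)) (fderiv ℝ (fderiv ℝ f) (t, s) (0, 1)) s :=
    fun t s => (hgd (t, s)).hasFDerivAt.comp_hasDerivAt s (hline2 t s)
  have h11 : ∀ t s : ℝ, HasDerivAt (fun τ => pd1 φ τ s) (fderiv ℝ (fderiv ℝ f) (t, s) (1, 0) (1, 0)) t := by
    intro t s
    have heq : (fun τ => pd1 φ τ s) = fun τ => fderiv ℝ f (τ, s) (1, 0) := by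
      funext τ; exact (hd1 τ s).deriv
    rw [heq]
    simpa using (hD1 t s).clm_apply (hasDerivAt_const t ((1 : ℝ), (0 : ℝ)))
  have h12 : ∀ t s : ℝ, HasDerivAt (fun τ => pd2 φ τ s) (fderiv ℝ (fderiv ℝ f) (t, s) (1, 0) (0, 1)) t := by
    intro t s
    have heq : (fun τ => pd2 φ τ s) = fun τ => fderiv ℝ f (τ, s) (0, 1) := by
      funext τ; exact (hd2 τ s).deriv
    rw [heq]
    simpa using (hD1 t s).clm_apply (hasDerivAt_const t ((0 : ℝ), (1 : ℝ)))
  have h21 : ∀ t s : ℝ, HasDerivAt (fun σ => pd1 φ t σ) (fderiv ℝ (fderiv ℝ f) (t, s) (0, 1) (1, 0)) s := by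
    intro t s
    have heq : (fun σ => pd1 φ t σ) = fun σ => fderiv ℝ f (t, σ) (1, 0) := by
      funext σ; exact (hd1 t σ).deriv
    rw [heq]
    simpa using (hD2 t s).clm_apply (hasDerivAt_const s ((1 : ℝ), (0 : ℝ)))
  have h22 : ∀ t s : ℝ, HasDerivAt (fun σ => pd2 φ t σ) (fderiv ℝ (fderiv ℝ f) (t, s) (0, 1) (0, 1)) s := by
    intro t s
    have heq : (fun σ => pd2 φ t σ) = fun σ => fderiv ℝ f (t, σ) (0, 1) := by
      funext σ; exact (hd2 t σ).deriv
    rw [heq]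
    simpa using (hD2 t s).clm_apply (hasDerivAt_const s ((0 : ℝ), (1 : ℝ)))
  have hsymm : fderiv ℝ (fderiv ℝ f) (t, s) (1, 0) (0, 1) = fderiv ℝ (fderiv ℝ f) (t, s) (0, 1) (1, 0) :=
    second_derivative_symmetric (fun y => (hfd y).hasFDerivAt) ((hgd (t, s)).hasFDerivAt) _ _
  -- values
  have hPne : φ t s ≠ 0 := (hφpos t s).ne'
  have hQne : pd2 φ t s ≠ 0 := (hφspos t s).ne'
  have hγne : γ - 1 ≠ 0 := sub_ne_zero.mpr (ne_of_gt hγ)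
  have hS' : HasDerivAt S (deriv S s) s := (hS.differentiable (by norm_num) s).hasDerivAt
  have hφt : pd1 φ t s = fderiv ℝ f (t, s) (1, 0) := (hd1 t s).deriv
  have hφs : pd2 φ t s = fderiv ℝ f (t, s) (0, 1) := (hd2 t s).deriv
  have h21' : HasDerivAt (fun σ => pd1 φ t σ) (fderiv ℝ (fderiv ℝ f) (t, s) (1, 0) (0, 1)) s := by
    rw [hsymm]; exact h21 t s
  -- derivative of the first component in t
  have hTt : HasDerivAt (fun τ =>
      (1 / 2) * pd1 φ τ s ^ 2
        + (S s / (γ - 1)) * φ τ s ^ ((n : ℝ) * (1 - γ)) * pd2 φ τ s ^ (1 - γ)) _ t :=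
    (((h11 t s).pow 2).const_mul ((1 : ℝ) / 2)).add
      ((((hd1 t s).rpow_const (Or.inl hPne)).const_mul (S s / (γ - 1))).mul
        ((h12 t s).rpow_const (Or.inl hQne)))
  -- derivative of the second component in s
  have hTs : HasDerivAt (fun σ =>
      pd1 φ t σ * S σ * φ t σ ^ ((n : ℝ) * (1 - γ)) * pd2 φ t σ ^ (-γ)) _ s :=
    (((h21'.mul hS').mul ((hd2 t s).rpow_const (Or.inl hPne))).mul
      ((h22 t s).rpow_const (Or.inl hQne)))
  show deriv (fun τ =>
      (1 / 2) * pd1 φ τ s ^ 2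
        + (S s / (γ - 1)) * φ τ s ^ ((n : ℝ) * (1 - γ)) * pd2 φ τ s ^ (1 - γ)) t
    + deriv (fun σ =>
        pd1 φ t σ * S σ * φ t σ ^ ((n : ℝ) * (1 - γ)) * pd2 φ t σ ^ (-γ)) s = 0
  rw [hTt.deriv, hTs.deriv]
  -- rewrite rpow exponents
  have hA1 : φ t s ^ ((n : ℝ) * (1 - γ) - 1) = φ t s ^ ((n : ℝ) * (1 - γ)) / φ t s := by
    rw [Real.rpow_sub (hφpos t s), Real.rpow_one]
  have hQ1 : pd2 φ t s ^ (1 - γ - 1) = pd2 φ t s ^ (-γ) := by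
    norm_num
  have hQ2 : pd2 φ t s ^ (1 - γ) = pd2 φ t s * pd2 φ t s ^ (-γ) := by
    rw [show (1 - γ) = 1 + -γ by ring, Real.rpow_add (hφspos t s), Real.rpow_one]
  have hQ3 : pd2 φ t s ^ (-γ - 1) = pd2 φ t s ^ (-γ) / pd2 φ t s := by
    rw [Real.rpow_sub (hφspos t s), Real.rpow_one]
  rw [hA1, hQ1, hQ2, hQ3, ← hφt, ← hφs]
  -- the equation
  have hs0 := hsol t s
  have e11 : pd1 (pd1 φ) t s = fderiv ℝ (fderiv ℝ f) (t, s) (1, 0) (1, 0) := (h11 t s).deriv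
  have e22 : pd2 (pd2 φ) t s = fderiv ℝ (fderiv ℝ f) (t, s) (0, 1) (0, 1) := (h22 t s).deriv
  simp only [gasEq, e11, e22] at hs0
  have h2 : fderiv ℝ (fderiv ℝ f) (t, s) (1, 0) (1, 0) * φ t s * pd2 φ t s
      + φ t s ^ ((n : ℝ) * (1 - γ)) * pd2 φ t s ^ (-γ) *
        (deriv S s * φ t s * pd2 φ t s
          - (n : ℝ) * γ * S s * pd2 φ t s * pd2 φ t s
          - γ * S s * fderiv ℝ (fderiv ℝ f) (t, s) (0, 1) (0, 1) * φ t s) = 0 := by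
    field_simp at hs0
    linarith [hs0]
  have key : 1 / 2 * (((2:ℕ):ℝ) * pd1 φ t s ^ (2 - 1) * ((fderiv ℝ (fderiv ℝ f) (t, s)) (1, 0)) (1, 0)) +
        (S s / (γ - 1) * (pd1 φ t s * ((n:ℝ) * (1 - γ)) * (φ t s ^ ((n:ℝ) * (1 - γ)) / φ t s)) *
            (pd2 φ t s * pd2 φ t s ^ (-γ)) +
          S s / (γ - 1) * φ t s ^ ((n:ℝ) * (1 - γ)) *
            (((fderiv ℝ (fderiv ℝ f) (t, s)) (1, 0)) (0, 1) * (1 - γ) * pd2 φ t s ^ (-γ))) +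
      (((((fderiv ℝ (fderiv ℝ f) (t, s)) (1, 0)) (0, 1) * S s + pd1 φ t s * deriv S s) * φ t s ^ ((n:ℝ) * (1 - γ)) +
            pd1 φ t s * S s * (pd2 φ t s * ((n:ℝ) * (1 - γ)) * (φ t s ^ ((n:ℝ) * (1 - γ)) / φ t s))) *
          pd2 φ t s ^ (-γ) +
        pd1 φ t s * S s * φ t s ^ ((n:ℝ) * (1 - γ)) *
          (((fderiv ℝ (fderiv ℝ f) (t, s)) (0, 1)) (0, 1) * -γ * (pd2 φ t s ^ (-γ) / pd2 φ t s)))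
      = pd1 φ t s / (φ t s * pd2 φ t s) *
        (((fderiv ℝ (fderiv ℝ f) (t, s)) (1, 0)) (1, 0) * φ t s * pd2 φ t s +
          φ t s ^ ((n:ℝ) * (1 - γ)) * pd2 φ t s ^ (-γ) *
            (deriv S s * φ t s * pd2 φ t s - (n:ℝ) * γ * S s * pd2 φ t s * pd2 φ t s -
              γ * S s * ((fderiv ℝ (fderiv ℝ f) (t, s)) (0, 1)) (0, 1) * φ t s)) := by
    field_simp
    ring
  simp only [Pi.mul_apply]; rw [key, h2, mul_zero]
end

section
/- Let n ∈ {0,1,2}, let γ = (n+3)/(n+1), and let S : ℝ → ℝ be C¹. If a C² function φ = φ(t,s) with φ > 0 and φ_s > 0 satisfies the Lagrangian gas dynamics equation φ_tt + φ^{n(1−γ)} φ_s^{−γ} ( S'(s) − nγ S(s) φ_s/φ − γ S(s) φ_ss/φ_s ) = 0, then the following conservation law (arising from the scaling symmetry 2t ∂_t + φ ∂_φ) holds: D_t[ −2t( (1/2)φ_t² + (S(s)/(γ−1)) φ^{n(1−γ)} φ_s^{1−γ} ) + φ φ_t ] + D_s[ −2t S(s) φ^{n(1−γ)} φ_t φ_s^{−γ}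 + S(s) φ^{−nγ+n+1} φ_s^{−γ} ] = 0. -/
set_option maxHeartbeats 2000000


/-- The uncurried version of `φ`. -/
private noncomputable def FF (φ : ℝ → ℝ → ℝ) : ℝ × ℝ → ℝ := fun q => φ q.1 q.2

/-- Jointly-defined first partial derivative in the first variable. -/
private noncomputable def DD1 (φ : ℝ → ℝ → ℝ) : ℝ × ℝ → ℝ :=
  fun q => fderiv ℝ (FF φ) q (1, 0)

/-- Jointly-defined first partial derivative in the second variable. -/
private noncomputable def DD2 (φ : ℝ → ℝ → ℝ) : ℝ × ℝ → ℝ :=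
  fun q => fderiv ℝ (FF φ) q (0, 1)

private lemma line1_hasDerivAt {F : ℝ × ℝ → ℝ} {t s : ℝ}
    (hF : DifferentiableAt ℝ F (t, s)) :
    HasDerivAt (fun τ => F (τ, s)) (fderiv ℝ F (t, s) (1, 0)) t := by
  have h2 : HasDerivAt (fun τ : ℝ => ((τ, s) : ℝ × ℝ)) (1, 0) t :=
    (hasDerivAt_id t).prodMk (hasDerivAt_const t s)
  exact HasFDerivAt.comp_hasDerivAt (x := t)
    (f := fun τ : ℝ => ((τ, s) : ℝ × ℝ)) hF.hasFDerivAt h2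

private lemma line2_hasDerivAt {F : ℝ × ℝ → ℝ} {t s : ℝ}
    (hF : DifferentiableAt ℝ F (t, s)) :
    HasDerivAt (fun σ => F (t, σ)) (fderiv ℝ F (t, s) (0, 1)) s := by
  have h2 : HasDerivAt (fun σ : ℝ => ((t, σ) : ℝ × ℝ)) (0, 1) s :=
    (hasDerivAt_const s t).prodMk (hasDerivAt_id s)
  exact HasFDerivAt.comp_hasDerivAt (x := s)
    (f := fun σ : ℝ => ((t, σ) : ℝ × ℝ)) hF.hasFDerivAt h2

/-- for the special adiabatic exponent γ = (n+3)/(n+1), the conservation law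
arising from the scaling symmetry 2t ∂_t + φ ∂_φ. -/
theorem scaling_conservation_law_special_gamma
    (n : ℕ) (hn : n ∈ ({0, 1, 2} : Set ℕ)) (γ : ℝ) (hγ : γ = ((n : ℝ) + 3) / ((n : ℝ) + 1))
    (S : ℝ → ℝ) (hS : ContDiff ℝ 1 S)
    (φ : ℝ → ℝ → ℝ) (hφ : ContDiff ℝ 2 (fun q : ℝ × ℝ => φ q.1 q.2))
    (hφpos : ∀ t s, 0 < φ t s) (hφspos : ∀ t s, 0 < pd2 φ t s)
    (hsol : ∀ t s, gasEq n γ S φ t s = 0) :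
    ∀ t s : ℝ,
      pd1 (fun t' s' =>
          -(2 * t') * ((1 / 2) * pd1 φ t' s' ^ 2
              + (S s' / (γ - 1)) * φ t' s' ^ ((n : ℝ) * (1 - γ)) * pd2 φ t' s' ^ (1 - γ))
            + φ t' s' * pd1 φ t' s') t s
        + pd2 (fun t' s' =>
            -(2 * t') * S s' * φ t' s' ^ ((n : ℝ) * (1 - γ)) * pd1 φ t' s' * pd2 φ t' s' ^ (-γ)
              + S s' * φ t' s' ^ (-(n : ℝ) * γ + (n : ℝ) + 1) * pd2 φ t' s' ^ (-γ)) t s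
        = 0 := by
  intro t s
  have hφ' : ContDiff ℝ 2 (FF φ) := hφ
  have hFd : Differentiable ℝ (FF φ) := hφ'.differentiable (by norm_num)
  have hG : ContDiff ℝ 1 (fderiv ℝ (FF φ)) := hφ'.fderiv_right (by norm_num)
  have hG1 : ContDiff ℝ 1 (DD1 φ) := hG.clm_apply contDiff_const
  have hG2 : ContDiff ℝ 1 (DD2 φ) := hG.clm_apply contDiff_const
  have hpd1 : pd1 φ = fun x y => DD1 φ (x, y) := by
    funext x y
    exact (line1_hasDerivAt (hFd (x, y))).deriv
  have hpd2 : pd2 φ = fun x y => DD2 φ (x, y) := by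
    funext x y
    exact (line2_hasDerivAt (hFd (x, y))).deriv
  -- symmetry of second derivatives
  have happ : ∀ v : ℝ × ℝ, fderiv ℝ (fun q => fderiv ℝ (FF φ) q v) (t, s)
      = (fderiv ℝ (fderiv ℝ (FF φ)) (t, s)).flip v := by
    intro v
    rw [fderiv_clm_apply (hG.differentiable (by norm_num) (t, s)) (differentiableAt_const v)]
    simp
  have hsymm : fderiv ℝ (DD1 φ) (t, s) (0, 1) = fderiv ℝ (DD2 φ) (t, s) (1, 0) := by
    have h2 := (hφ'.contDiffAt (x := (t, s))).isSymmSndFDerivAt (by norm_num)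
    have e1 : fderiv ℝ (DD1 φ) (t, s) (0, 1)
        = fderiv ℝ (fderiv ℝ (FF φ)) (t, s) (0, 1) (1, 0) := by
      rw [show DD1 φ = fun q => fderiv ℝ (FF φ) q (1, 0) from rfl, happ (1, 0)]; rfl
    have e2 : fderiv ℝ (DD2 φ) (t, s) (1, 0)
        = fderiv ℝ (fderiv ℝ (FF φ)) (t, s) (1, 0) (0, 1) := by
      rw [show DD2 φ = fun q => fderiv ℝ (FF φ) q (0, 1) from rfl, happ (0, 1)]; rfl
    rw [e1, e2, h2 (0, 1) (1, 0)]
  -- nonvanishing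
  have hune : φ t s ≠ 0 := ne_of_gt (hφpos t s)
  have huspos : 0 < DD2 φ (t, s) := by
    have h := hφspos t s
    rwa [hpd2] at h
  have husne : DD2 φ (t, s) ≠ 0 := ne_of_gt huspos
  have hupos : 0 < φ t s := hφpos t s
  -- one-dimensional derivative facts
  have hu_t : HasDerivAt (fun τ => φ τ s) (DD1 φ (t, s)) t := line1_hasDerivAt (hFd (t, s))
  have hu_s : HasDerivAt (fun σ => φ t σ) (DD2 φ (t, s)) s := line2_hasDerivAt (hFd (t, s))
  have hut_t : HasDerivAt (fun τ => DD1 φ (τ, s)) (fderiv ℝ (DD1 φ) (t, s) (1, 0)) t :=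
    line1_hasDerivAt (hG1.differentiable (by norm_num) (t, s))
  have hut_s : HasDerivAt (fun σ => DD1 φ (t, σ)) (fderiv ℝ (DD2 φ) (t, s) (1, 0)) s := by
    have h := line2_hasDerivAt (hG1.differentiable (by norm_num) (t, s))
    rwa [hsymm] at h
  have hus_t : HasDerivAt (fun τ => DD2 φ (τ, s)) (fderiv ℝ (DD2 φ) (t, s) (1, 0)) t :=
    line1_hasDerivAt (hG2.differentiable (by norm_num) (t, s))
  have hus_s : HasDerivAt (fun σ => DD2 φ (t, σ)) (fderiv ℝ (DD2 φ) (t, s) (0, 1)) s :=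
    line2_hasDerivAt (hG2.differentiable (by norm_num) (t, s))
  have hS' : HasDerivAt S (deriv S s) s := ((hS.differentiable (by norm_num)) s).hasDerivAt
  -- the PDE at (t, s)
  have hpde : fderiv ℝ (DD1 φ) (t, s) (1, 0)
      + φ t s ^ ((n : ℝ) * (1 - γ)) * DD2 φ (t, s) ^ (-γ) *
        (deriv S s - (n : ℝ) * γ * S s * DD2 φ (t, s) / φ t s
          - γ * S s * fderiv ℝ (DD2 φ) (t, s) (0, 1) / DD2 φ (t, s)) = 0 := by
    have h := hsol t s
    unfold gasEq at h
    simp only [hpd1, hpd2] at h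
    rw [show pd1 (fun x y => DD1 φ (x, y)) t s = fderiv ℝ (DD1 φ) (t, s) (1, 0) from
          hut_t.deriv,
        show pd2 (fun x y => DD2 φ (x, y)) t s = fderiv ℝ (DD2 φ) (t, s) (0, 1) from
          hus_s.deriv] at h
    exact h
  -- solve the PDE for φ_tt
  have hutt : fderiv ℝ (DD1 φ) (t, s) (1, 0)
      = -(φ t s ^ ((n : ℝ) * (1 - γ)) * DD2 φ (t, s) ^ (-γ)) * deriv S s
        + (n : ℝ) * γ * S s * (φ t s ^ ((n : ℝ) * (1 - γ)) * DD2 φ (t, s) ^ (-γ))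
            * DD2 φ (t, s) / φ t s
        + γ * S s * (φ t s ^ ((n : ℝ) * (1 - γ)) * DD2 φ (t, s) ^ (-γ))
            * fderiv ℝ (DD2 φ) (t, s) (0, 1) / DD2 φ (t, s) := by
    linear_combination hpde
  -- the total t-derivative of the first flux
  have hbig1 : HasDerivAt (fun τ : ℝ =>
      -(2 * τ) * (1 / 2 * DD1 φ (τ, s) ^ 2
          + S s / (γ - 1) * φ τ s ^ ((n : ℝ) * (1 - γ)) * DD2 φ (τ, s) ^ (1 - γ))
        + φ τ s * DD1 φ (τ, s))
      (-2 * (1 / 2 * DD1 φ (t, s) ^ 2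
          + S s / (γ - 1) * φ t s ^ ((n : ℝ) * (1 - γ))
              * (DD2 φ (t, s) ^ (-γ) * DD2 φ (t, s)))
        + -(2 * t) * (DD1 φ (t, s) * fderiv ℝ (DD1 φ) (t, s) (1, 0)
          + S s / (γ - 1) * (((n : ℝ) * (1 - γ)) * φ t s ^ ((n : ℝ) * (1 - γ))
                * DD2 φ (t, s) ^ (-γ) * DD2 φ (t, s) * DD1 φ (t, s) / φ t s
              + (1 - γ) * φ t s ^ ((n : ℝ) * (1 - γ)) * DD2 φ (t, s) ^ (-γ)
                * fderiv ℝ (DD2 φ) (t, s) (1, 0)))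
        + (DD1 φ (t, s) * DD1 φ (t, s) + φ t s * fderiv ℝ (DD1 φ) (t, s) (1, 0))) t := by
    have hA1 : HasDerivAt (fun τ : ℝ => -(2 * τ)) (-2) t := by
      have := ((hasDerivAt_id t).const_mul (2 : ℝ)).neg
      simpa [Pi.neg_def] using this
    have hP1 := (hu_t.rpow_const (p := (n : ℝ) * (1 - γ)) (Or.inl hune)).const_mul
        (S s / (γ - 1))
    have hP2 := hus_t.rpow_const (p := 1 - γ) (Or.inl husne)
    have hInner := ((hut_t.pow 2).const_mul ((1 : ℝ) / 2)).add (hP1.mul hP2)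
    have h := (hA1.mul hInner).add (hu_t.mul hut_t)
    convert h using 1
    case e'_4 => rfl
    case e'_5 => rfl
    case e'_8 => rfl
    simp only [Pi.add_apply, Pi.mul_apply, Pi.pow_apply]
    rw [show (1 - γ - 1 : ℝ) = -γ by ring]
    rw [show (1 - γ : ℝ) = -γ + 1 by ring]
    rw [Real.rpow_add huspos, Real.rpow_one, Real.rpow_sub_one hune]
    ring
  -- the total s-derivative of the second flux
  have hbig2 : HasDerivAt (fun σ : ℝ =>
      -(2 * t) * S σ * φ t σ ^ ((n : ℝ) * (1 - γ)) * DD1 φ (t, σ) * DD2 φ (t, σ) ^ (-γ)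
        + S σ * φ t σ ^ (-(n : ℝ) * γ + (n : ℝ) + 1) * DD2 φ (t, σ) ^ (-γ))
      (-(2 * t) * (deriv S s * φ t s ^ ((n : ℝ) * (1 - γ)) * DD1 φ (t, s)
            * DD2 φ (t, s) ^ (-γ)
          + S s * (((n : ℝ) * (1 - γ)) * φ t s ^ ((n : ℝ) * (1 - γ)) * DD2 φ (t, s)
                * DD1 φ (t, s) * DD2 φ (t, s) ^ (-γ) / φ t s
              + φ t s ^ ((n : ℝ) * (1 - γ)) * fderiv ℝ (DD2 φ) (t, s) (1, 0)
                * DD2 φ (t, s) ^ (-γ)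
              - γ * φ t s ^ ((n : ℝ) * (1 - γ)) * DD1 φ (t, s) * DD2 φ (t, s) ^ (-γ)
                * fderiv ℝ (DD2 φ) (t, s) (0, 1) / DD2 φ (t, s)))
        + (deriv S s * (φ t s ^ ((n : ℝ) * (1 - γ)) * φ t s) * DD2 φ (t, s) ^ (-γ)
          + S s * ((((n : ℝ) * (1 - γ)) + 1) * φ t s ^ ((n : ℝ) * (1 - γ)) * DD2 φ (t, s)
                * DD2 φ (t, s) ^ (-γ)
              - γ * φ t s ^ ((n : ℝ) * (1 - γ)) * φ t s * DD2 φ (t, s) ^ (-γ)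
                * fderiv ℝ (DD2 φ) (t, s) (0, 1) / DD2 φ (t, s)))) s := by
    have hQ0 : HasDerivAt (fun _ : ℝ => -(2 * t)) 0 s := hasDerivAt_const s (-(2 * t))
    have hQa := hu_s.rpow_const (p := (n : ℝ) * (1 - γ)) (Or.inl hune)
    have hQb := hu_s.rpow_const (p := -(n : ℝ) * γ + (n : ℝ) + 1) (Or.inl hune)
    have hQg := hus_s.rpow_const (p := -γ) (Or.inl husne)
    have hT1 := (((hQ0.mul hS').mul hQa).mul hut_s).mul hQg
    have hT2 := (hS'.mul hQb).mul hQg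
    have h := hT1.add hT2
    convert h using 1
    case e'_4 => rfl
    case e'_5 => rfl
    case e'_8 => rfl
    simp only [Pi.add_apply, Pi.mul_apply, Pi.pow_apply]
    rw [show (-(n : ℝ) * γ + (n : ℝ) + 1 - 1 : ℝ) = (n : ℝ) * (1 - γ) by ring]
    rw [show (-(n : ℝ) * γ + (n : ℝ) + 1 : ℝ) = (n : ℝ) * (1 - γ) + 1 by ring]
    rw [Real.rpow_add hupos, Real.rpow_one, Real.rpow_sub_one hune,
        Real.rpow_sub_one husne]
    ring
  -- rewrite the two outer partial derivatives
  have e1 : pd1 (fun t' s' =>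
          -(2 * t') * ((1 / 2) * pd1 φ t' s' ^ 2
              + (S s' / (γ - 1)) * φ t' s' ^ ((n : ℝ) * (1 - γ)) * pd2 φ t' s' ^ (1 - γ))
            + φ t' s' * pd1 φ t' s') t s
      = -2 * (1 / 2 * DD1 φ (t, s) ^ 2
          + S s / (γ - 1) * φ t s ^ ((n : ℝ) * (1 - γ))
              * (DD2 φ (t, s) ^ (-γ) * DD2 φ (t, s)))
        + -(2 * t) * (DD1 φ (t, s) * fderiv ℝ (DD1 φ) (t, s) (1, 0)
          + S s / (γ - 1) * (((n : ℝ) * (1 - γ)) * φ t s ^ ((n : ℝ) * (1 - γ))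
                * DD2 φ (t, s) ^ (-γ) * DD2 φ (t, s) * DD1 φ (t, s) / φ t s
              + (1 - γ) * φ t s ^ ((n : ℝ) * (1 - γ)) * DD2 φ (t, s) ^ (-γ)
                * fderiv ℝ (DD2 φ) (t, s) (1, 0)))
        + (DD1 φ (t, s) * DD1 φ (t, s) + φ t s * fderiv ℝ (DD1 φ) (t, s) (1, 0)) := by
    simp only [hpd1, hpd2]
    exact hbig1.deriv
  have e2 : pd2 (fun t' s' =>
            -(2 * t') * S s' * φ t' s' ^ ((n : ℝ) * (1 - γ)) * pd1 φ t' s' * pd2 φ t' s' ^ (-γ)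
              + S s' * φ t' s' ^ (-(n : ℝ) * γ + (n : ℝ) + 1) * pd2 φ t' s' ^ (-γ)) t s
      = -(2 * t) * (deriv S s * φ t s ^ ((n : ℝ) * (1 - γ)) * DD1 φ (t, s)
            * DD2 φ (t, s) ^ (-γ)
          + S s * (((n : ℝ) * (1 - γ)) * φ t s ^ ((n : ℝ) * (1 - γ)) * DD2 φ (t, s)
                * DD1 φ (t, s) * DD2 φ (t, s) ^ (-γ) / φ t s
              + φ t s ^ ((n : ℝ) * (1 - γ)) * fderiv ℝ (DD2 φ) (t, s) (1, 0)
                * DD2 φ (t, s) ^ (-γ)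
              - γ * φ t s ^ ((n : ℝ) * (1 - γ)) * DD1 φ (t, s) * DD2 φ (t, s) ^ (-γ)
                * fderiv ℝ (DD2 φ) (t, s) (0, 1) / DD2 φ (t, s)))
        + (deriv S s * (φ t s ^ ((n : ℝ) * (1 - γ)) * φ t s) * DD2 φ (t, s) ^ (-γ)
          + S s * ((((n : ℝ) * (1 - γ)) + 1) * φ t s ^ ((n : ℝ) * (1 - γ)) * DD2 φ (t, s)
                * DD2 φ (t, s) ^ (-γ)
              - γ * φ t s ^ ((n : ℝ) * (1 - γ)) * φ t s * DD2 φ (t, s) ^ (-γ)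
                * fderiv ℝ (DD2 φ) (t, s) (0, 1) / DD2 φ (t, s))) := by
    simp only [hpd1, hpd2]
    exact hbig2.deriv
  rw [e1, e2, hutt]
  -- now a purely algebraic identity
  generalize φ t s ^ ((n : ℝ) * (1 - γ)) = A
  generalize DD2 φ (t, s) ^ (-γ) = B
  generalize hU : φ t s = u at hune
  generalize hUs : DD2 φ (t, s) = us at husne
  generalize DD1 φ (t, s) = ut
  generalize fderiv ℝ (DD2 φ) (t, s) (1, 0) = uts
  generalize fderiv ℝ (DD2 φ) (t, s) (0, 1) = uss
  generalize deriv S s = S'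
  subst hγ
  have hn1 : ((n : ℝ) + 1) ≠ 0 := by positivity
  have hγ1 : (((n : ℝ) + 3) / ((n : ℝ) + 1) - 1) ≠ 0 := by
    rw [div_sub_one hn1, show ((n : ℝ) + 3) - ((n : ℝ) + 1) = 2 by ring]
    positivity
  field_simp
  ring
end

section
/- Let n ∈ {0,1,2}, let γ = (n+3)/(n+1), and let S : ℝ → ℝ be C¹. If a C² function φ = φ(t,s) with φ > 0 and φ_s > 0 satisfies the Lagrangian gas dynamics equation φ_tt + φ^{n(1−γ)} φ_s^{−γ} ( S'(s) − nγ S(s) φ_s/φ − γ S(s) φ_ss/φ_s ) = 0, then the following conservation law (arising from the projective symmetry t² ∂_t + tφ ∂_φ) holds: D_t[ −t²( (1/2)φ_t² + (S(s)/(γ−1)) φ^{n(1−γ)} φ_s^{1−γ} ) + t φ φ_t − φ²/2 ] + D_s[ −t² S(s) φ^{n(1−γ)} φ_t φ_s^{−γ} + t S(s) φ^{−nγ+n+1} φ_s^{−γ} ] = 0. -/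
private lemma hasDerivAt_fst' {f : ℝ × ℝ → ℝ} (hf : Differentiable ℝ f) (t s : ℝ) :
    HasDerivAt (fun τ => f (τ, s)) (fderiv ℝ f (t, s) (1, 0)) t := by
  have h1 : HasDerivAt (fun τ : ℝ => (τ, s)) ((1 : ℝ), (0 : ℝ)) t :=
    (hasDerivAt_id t).prodMk (hasDerivAt_const t s)
  exact (hf (t, s)).hasFDerivAt.comp_hasDerivAt t h1

private lemma hasDerivAt_snd' {f : ℝ × ℝ → ℝ} (hf : Differentiable ℝ f) (t s : ℝ) :
    HasDerivAt (fun σ => f (t, σ)) (fderiv ℝ f (t, s) (0, 1)) s := by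
  have h1 : HasDerivAt (fun σ : ℝ => (t, σ)) ((0 : ℝ), (1 : ℝ)) s :=
    (hasDerivAt_const s t).prodMk (hasDerivAt_id s)
  exact (hf (t, s)).hasFDerivAt.comp_hasDerivAt s h1

set_option maxHeartbeats 2000000 in
/-- for the special adiabatic exponent γ = (n+3)/(n+1), the conservation law
arising from the projective symmetry t² ∂_t + tφ ∂_φ. -/
theorem projective_conservation_law_special_gamma
    (n : ℕ) (hn : n ∈ ({0, 1, 2} : Set ℕ)) (γ : ℝ) (hγ : γ = ((n : ℝ) + 3) / ((n : ℝ) + 1))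
    (S : ℝ → ℝ) (hS : ContDiff ℝ 1 S)
    (φ : ℝ → ℝ → ℝ) (hφ : ContDiff ℝ 2 (fun q : ℝ × ℝ => φ q.1 q.2))
    (hφpos : ∀ t s, 0 < φ t s) (hφspos : ∀ t s, 0 < pd2 φ t s)
    (hsol : ∀ t s, gasEq n γ S φ t s = 0) :
    ∀ t s : ℝ,
      pd1 (fun t' s' =>
          -(t' ^ 2) * ((1 / 2) * pd1 φ t' s' ^ 2
              + (S s' / (γ - 1)) * φ t' s' ^ ((n : ℝ) * (1 - γ)) * pd2 φ t' s' ^ (1 - γ))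
            + t' * φ t' s' * pd1 φ t' s' - φ t' s' ^ 2 / 2) t s
        + pd2 (fun t' s' =>
            -(t' ^ 2) * S s' * φ t' s' ^ ((n : ℝ) * (1 - γ)) * pd1 φ t' s' * pd2 φ t' s' ^ (-γ)
              + t' * S s' * φ t' s' ^ (-(n : ℝ) * γ + (n : ℝ) + 1) * pd2 φ t' s' ^ (-γ)) t s
        = 0 := by
  intro t s
  set F : ℝ × ℝ → ℝ := fun q => φ q.1 q.2 with hFdef
  have hFd : Differentiable ℝ F := hφ.differentiable (by norm_num)
  have hpd1 : ∀ t s, pd1 φ t s = fderiv ℝ F (t, s) (1, 0) := fun t s =>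
    (hasDerivAt_fst' hFd t s).deriv
  have hpd2 : ∀ t s, pd2 φ t s = fderiv ℝ F (t, s) (0, 1) := fun t s =>
    (hasDerivAt_snd' hFd t s).deriv
  have hfdF : ContDiff ℝ 1 (fderiv ℝ F) := hφ.fderiv_right (by norm_num)
  have hG1 : ContDiff ℝ 1 (fun x : ℝ × ℝ => fderiv ℝ F x (1, 0)) :=
    hfdF.clm_apply contDiff_const
  have hG2 : ContDiff ℝ 1 (fun x : ℝ × ℝ => fderiv ℝ F x (0, 1)) :=
    hfdF.clm_apply contDiff_const
  have e1 : (fun τ => pd1 φ τ s) = fun τ => fderiv ℝ F (τ, s) (1, 0) :=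
    funext fun τ => hpd1 τ s
  have e2t : (fun τ => pd2 φ τ s) = fun τ => fderiv ℝ F (τ, s) (0, 1) :=
    funext fun τ => hpd2 τ s
  have e1s : (fun σ => pd1 φ t σ) = fun σ => fderiv ℝ F (t, σ) (1, 0) :=
    funext fun σ => hpd1 t σ
  have e2s : (fun σ => pd2 φ t σ) = fun σ => fderiv ℝ F (t, σ) (0, 1) :=
    funext fun σ => hpd2 t σ
  have h0 : HasDerivAt (fun τ => φ τ s) (pd1 φ t s) t := by
    have := hasDerivAt_fst' hFd t s
    rw [← hpd1 t s] at this; exact this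
  have h1 : HasDerivAt (fun τ => pd1 φ τ s) (pd1 (pd1 φ) t s) t := by
    have hd : DifferentiableAt ℝ (fun τ => pd1 φ τ s) t := by
      rw [e1]
      exact (hasDerivAt_fst' (hG1.differentiable one_ne_zero) t s).differentiableAt
    exact hd.hasDerivAt
  have h2 : HasDerivAt (fun τ => pd2 φ τ s) (pd1 (pd2 φ) t s) t := by
    have hd : DifferentiableAt ℝ (fun τ => pd2 φ τ s) t := by
      rw [e2t]
      exact (hasDerivAt_fst' (hG2.differentiable one_ne_zero) t s).differentiableAt
    exact hd.hasDerivAt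
  have k0 : HasDerivAt (fun σ => φ t σ) (pd2 φ t s) s := by
    have := hasDerivAt_snd' hFd t s
    rw [← hpd2 t s] at this; exact this
  have k1 : HasDerivAt (fun σ => pd1 φ t σ) (pd2 (pd1 φ) t s) s := by
    have hd : DifferentiableAt ℝ (fun σ => pd1 φ t σ) s := by
      rw [e1s]
      exact (hasDerivAt_snd' (hG1.differentiable one_ne_zero) t s).differentiableAt
    exact hd.hasDerivAt
  have k2 : HasDerivAt (fun σ => pd2 φ t σ) (pd2 (pd2 φ) t s) s := by
    have hd : DifferentiableAt ℝ (fun σ => pd2 φ t σ) s := by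
      rw [e2s]
      exact (hasDerivAt_snd' (hG2.differentiable one_ne_zero) t s).differentiableAt
    exact hd.hasDerivAt
  have hsym : pd1 (pd2 φ) t s = pd2 (pd1 φ) t s := by
    have hsymm : IsSymmSndFDerivAt ℝ F (t, s) :=
      (hφ.contDiffAt).isSymmSndFDerivAt (by norm_num)
    have hdF : Differentiable ℝ (fderiv ℝ F) := hfdF.differentiable one_ne_zero
    have q12 : pd1 (pd2 φ) t s = fderiv ℝ (fun x => fderiv ℝ F x (0, 1)) (t, s) (1, 0) := by
      show deriv (fun τ => pd2 φ τ s) t = _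
      rw [e2t]
      exact (hasDerivAt_fst' ((hG2.differentiable one_ne_zero)) t s).deriv
    have q21 : pd2 (pd1 φ) t s = fderiv ℝ (fun x => fderiv ℝ F x (1, 0)) (t, s) (0, 1) := by
      show deriv (fun σ => pd1 φ t σ) s = _
      rw [e1s]
      exact (hasDerivAt_snd' ((hG1.differentiable one_ne_zero)) t s).deriv
    have c2 : fderiv ℝ (fun x => fderiv ℝ F x (0, 1)) (t, s)
        = (fderiv ℝ (fderiv ℝ F) (t, s)).flip (0, 1) := by
      rw [fderiv_clm_apply (hdF (t, s)) (differentiableAt_const _)]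
      simp
    have c1 : fderiv ℝ (fun x => fderiv ℝ F x (1, 0)) (t, s)
        = (fderiv ℝ (fderiv ℝ F) (t, s)).flip (1, 0) := by
      rw [fderiv_clm_apply (hdF (t, s)) (differentiableAt_const _)]
      simp
    rw [q12, q21, c1, c2]
    exact hsymm (1, 0) (0, 1)
  have kS : HasDerivAt S (deriv S s) s := ((hS.differentiable one_ne_zero) s).hasDerivAt
  have ha0 : φ t s ≠ 0 := (hφpos t s).ne'
  have hv0 : pd2 φ t s ≠ 0 := (hφspos t s).ne'
  -- rpow chain rules
  have hA : HasDerivAt (fun τ => φ τ s ^ ((n : ℝ) * (1 - γ)))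
      (pd1 φ t s * ((n : ℝ) * (1 - γ)) * φ t s ^ ((n : ℝ) * (1 - γ) - 1)) t :=
    h0.rpow_const (Or.inl ha0)
  have hB : HasDerivAt (fun τ => pd2 φ τ s ^ (1 - γ))
      (pd1 (pd2 φ) t s * (1 - γ) * pd2 φ t s ^ (1 - γ - 1)) t :=
    h2.rpow_const (Or.inl hv0)
  have kA : HasDerivAt (fun σ => φ t σ ^ ((n : ℝ) * (1 - γ)))
      (pd2 φ t s * ((n : ℝ) * (1 - γ)) * φ t s ^ ((n : ℝ) * (1 - γ) - 1)) s :=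
    k0.rpow_const (Or.inl ha0)
  have kA2 : HasDerivAt (fun σ => φ t σ ^ (-(n : ℝ) * γ + (n : ℝ) + 1))
      (pd2 φ t s * (-(n : ℝ) * γ + (n : ℝ) + 1) * φ t s ^ (-(n : ℝ) * γ + (n : ℝ) + 1 - 1)) s :=
    k0.rpow_const (Or.inl ha0)
  have kB : HasDerivAt (fun σ => pd2 φ t σ ^ (-γ))
      (pd2 (pd2 φ) t s * (-γ) * pd2 φ t s ^ (-γ - 1)) s :=
    k2.rpow_const (Or.inl hv0)
  -- total derivative of the density T^t in t
  have hTt : HasDerivAt (fun τ =>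
      -(τ ^ 2) * ((1 / 2) * pd1 φ τ s ^ 2
        + S s / (γ - 1) * φ τ s ^ ((n : ℝ) * (1 - γ)) * pd2 φ τ s ^ (1 - γ))
      + τ * φ τ s * pd1 φ τ s - φ τ s ^ 2 / 2)
      (-(2 * t) * ((1 / 2) * pd1 φ t s ^ 2
          + S s / (γ - 1) * φ t s ^ ((n : ℝ) * (1 - γ)) * pd2 φ t s ^ (1 - γ))
        - t ^ 2 * (pd1 φ t s * pd1 (pd1 φ) t s
          + S s / (γ - 1) * ((n : ℝ) * (1 - γ)) * φ t s ^ ((n : ℝ) * (1 - γ) - 1)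
            * pd1 φ t s * pd2 φ t s ^ (1 - γ)
          + S s / (γ - 1) * φ t s ^ ((n : ℝ) * (1 - γ)) * (1 - γ)
            * pd2 φ t s ^ (1 - γ - 1) * pd1 (pd2 φ) t s)
        + φ t s * pd1 φ t s + t * pd1 φ t s ^ 2 + t * φ t s * pd1 (pd1 φ) t s
        - φ t s * pd1 φ t s) t := by
    have big := (((hasDerivAt_pow 2 t).neg.mul
        (((h1.pow 2).const_mul ((1:ℝ) / 2)).add
          ((hA.const_mul (S s / (γ - 1))).mul hB))).add
        (((hasDerivAt_id t).mul h0).mul h1)).sub ((h0.pow 2).div_const 2)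
    refine big.congr_deriv ?_
    simp only [id_eq, Pi.mul_apply, Pi.add_apply, Pi.neg_apply, Pi.pow_apply]
    push_cast
    ring
  -- total derivative of the flux T^s in s
  have hTs : HasDerivAt (fun σ =>
      -(t ^ 2) * S σ * φ t σ ^ ((n : ℝ) * (1 - γ)) * pd1 φ t σ * pd2 φ t σ ^ (-γ)
        + t * S σ * φ t σ ^ (-(n : ℝ) * γ + (n : ℝ) + 1) * pd2 φ t σ ^ (-γ))
      (-(t ^ 2) * (deriv S s * φ t s ^ ((n : ℝ) * (1 - γ)) * pd1 φ t s * pd2 φ t s ^ (-γ)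
          + S s * ((n : ℝ) * (1 - γ)) * φ t s ^ ((n : ℝ) * (1 - γ) - 1) * pd2 φ t s
            * pd1 φ t s * pd2 φ t s ^ (-γ)
          + S s * φ t s ^ ((n : ℝ) * (1 - γ)) * pd2 (pd1 φ) t s * pd2 φ t s ^ (-γ)
          + S s * φ t s ^ ((n : ℝ) * (1 - γ)) * pd1 φ t s * (-γ)
            * pd2 φ t s ^ (-γ - 1) * pd2 (pd2 φ) t s)
        + t * (deriv S s * φ t s ^ (-(n : ℝ) * γ + (n : ℝ) + 1) * pd2 φ t s ^ (-γ)
          + S s * (-(n : ℝ) * γ + (n : ℝ) + 1) * φ t s ^ (-(n : ℝ) * γ + (n : ℝ) + 1 - 1)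
            * pd2 φ t s * pd2 φ t s ^ (-γ)
          + S s * φ t s ^ (-(n : ℝ) * γ + (n : ℝ) + 1) * (-γ)
            * pd2 φ t s ^ (-γ - 1) * pd2 (pd2 φ) t s)) s := by
    have big := ((((kS.const_mul (-(t ^ 2))).mul kA).mul k1).mul kB).add
      (((kS.const_mul t).mul kA2).mul kB)
    refine big.congr_deriv ?_
    simp only [Pi.mul_apply, Pi.add_apply, Pi.neg_apply]
    ring
  -- rewrite the goal using the two derivative computations
  show deriv (fun τ =>
      -(τ ^ 2) * ((1 / 2) * pd1 φ τ s ^ 2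
        + S s / (γ - 1) * φ τ s ^ ((n : ℝ) * (1 - γ)) * pd2 φ τ s ^ (1 - γ))
      + τ * φ τ s * pd1 φ τ s - φ τ s ^ 2 / 2) t
    + deriv (fun σ =>
      -(t ^ 2) * S σ * φ t σ ^ ((n : ℝ) * (1 - γ)) * pd1 φ t σ * pd2 φ t σ ^ (-γ)
        + t * S σ * φ t σ ^ (-(n : ℝ) * γ + (n : ℝ) + 1) * pd2 φ t σ ^ (-γ)) s = 0
  rw [hTt.deriv, hTs.deriv]
  -- the gas dynamics equation at (t, s), solved for φ_tt
  have hz : pd1 (pd1 φ) t s =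
      -(φ t s ^ ((n : ℝ) * (1 - γ)) * pd2 φ t s ^ (-γ) *
        (deriv S s - (n : ℝ) * γ * S s * pd2 φ t s / φ t s
          - γ * S s * pd2 (pd2 φ) t s / pd2 φ t s)) := by
    have hE := hsol t s
    unfold gasEq at hE
    linarith
  -- exponent arithmetic for rpow
  have r1 : φ t s ^ ((n : ℝ) * (1 - γ) - 1)
      = φ t s ^ ((n : ℝ) * (1 - γ)) / φ t s := Real.rpow_sub_one ha0 _
  have r2 : pd2 φ t s ^ (1 - γ) = pd2 φ t s ^ (-γ) * pd2 φ t s := by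
    rw [show (1 : ℝ) - γ = -γ + 1 by ring, Real.rpow_add_one hv0]
  have r3 : pd2 φ t s ^ (1 - γ - 1) = pd2 φ t s ^ (-γ) := by
    rw [show (1 : ℝ) - γ - 1 = -γ by ring]
  have r4 : pd2 φ t s ^ (-γ - 1) = pd2 φ t s ^ (-γ) / pd2 φ t s :=
    Real.rpow_sub_one hv0 _
  have r5 : φ t s ^ (-(n : ℝ) * γ + (n : ℝ) + 1)
      = φ t s ^ ((n : ℝ) * (1 - γ)) * φ t s := by
    rw [show -(n : ℝ) * γ + (n : ℝ) + 1 = (n : ℝ) * (1 - γ) + 1 by ring,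
      Real.rpow_add_one ha0]
  have r6 : φ t s ^ (-(n : ℝ) * γ + (n : ℝ) + 1 - 1) = φ t s ^ ((n : ℝ) * (1 - γ)) := by
    rw [show -(n : ℝ) * γ + (n : ℝ) + 1 - 1 = (n : ℝ) * (1 - γ) by ring]
  rw [hz, ← hsym, r1, r2, r3, r4, r5, r6]
  have hn0 : ((n : ℝ) + 1) ≠ 0 := by positivity
  have hγ1 : γ - 1 ≠ 0 := by
    rw [hγ]
    rw [div_sub_one hn0]
    simp [hn0]
    intro h
    nlinarith [Nat.cast_nonneg (α := ℝ) n]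
  subst hγ
  field_simp
  ring
end

section
/- Let n ∈ {0,1,2}, let γ = (n+3)/(n+1), and let S : ℝ → ℝ be C¹. Consider the Lagrangian L(t,s,φ,φ_t,φ_s) = (1/2)φ_t² − (S(s)/(γ−1)) φ^{(1−γ)n} φ_s^{1−γ} and the generator X = t² ∂/∂t + tφ ∂/∂φ with prolonged coefficients η^{(t)} = φ − t φ_t and η^{(s)} = t φ_s. Then the divergence-symmetry identity X L + L (D_t ξ^t + D_s ξ^s) = D_t B₁ + D_s B₂ holds with (B₁, B₂) = (φ²/2, 0); explicitly, for all t, s, φ > 0, φ_t, φ_s > 0: tφ · ∂L/∂φ + (φ − t φ_t) · ∂L/∂φ_t + t φ_s · ∂L/∂φ_s + 2t · L = φ φ_t. -/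
/-- for γ = (n+3)/(n+1), the generator X = t² ∂_t + tφ ∂_φ with prolonged
coefficients η^{(t)} = φ − t φ_t and η^{(s)} = t φ_s satisfies the divergence-symmetry
identity X L + L (D_t ξ^t + D_s ξ^s) = D_t B₁ + D_s B₂ with (B₁, B₂) = (φ²/2, 0);
explicitly, tφ·∂L/∂φ + (φ − tφ_t)·∂L/∂φ_t + tφ_s·∂L/∂φ_s + 2t·L = φφ_t. -/
theorem divergence_symmetry_identity_projective
    (n : ℕ) (hn : n ∈ ({0, 1, 2} : Set ℕ)) (γ : ℝ) (hγ : γ = ((n : ℝ) + 3) / ((n : ℝ) + 1))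
    (S : ℝ → ℝ) (hS : ContDiff ℝ 1 S)
    (L : ℝ → ℝ → ℝ → ℝ → ℝ → ℝ)
    (hL : L = fun t s x v w =>
      (1 / 2) * v ^ 2 - (S s / (γ - 1)) * x ^ ((1 - γ) * (n : ℝ)) * w ^ (1 - γ)) :
    ∀ t s x v w : ℝ, 0 < x → 0 < w →
      t * x * deriv (fun x' => L t s x' v w) x
        + (x - t * v) * deriv (fun v' => L t s x v' w) v
        + t * w * deriv (fun w' => L t s x v w') w
        + 2 * t * L t s x v w
        = x * v := by
  intro t s x v w hx hw
  have hx' : x ≠ 0 := ne_of_gt hx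
  have hw' : w ≠ 0 := ne_of_gt hw
  have hn1 : (n : ℝ) + 1 ≠ 0 := by positivity
  subst hL
  set a : ℝ := (1 - γ) * n with ha
  set b : ℝ := 1 - γ with hb
  set C : ℝ := S s / (γ - 1) with hC
  have hab : a + b + 2 = 0 := by
    rw [ha, hb, hγ]; field_simp; ring
  have hdx : HasDerivAt (fun x' : ℝ => (1/2) * v ^ 2 - C * x' ^ a * w ^ b)
      (-(C * (a * x ^ (a - 1)) * w ^ b)) x := by
    exact (((Real.hasDerivAt_rpow_const (Or.inl hx')).const_mul C).mul_const
      (w ^ b)).const_sub _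
  have hdv : HasDerivAt (fun v' : ℝ => (1/2) * v' ^ 2 - C * x ^ a * w ^ b)
      ((1/2) * (2 * v ^ 1)) v := by
    exact ((hasDerivAt_pow 2 v).const_mul (1/2)).sub_const _
  have hdw : HasDerivAt (fun w' : ℝ => (1/2) * v ^ 2 - C * x ^ a * w' ^ b)
      (-(C * x ^ a * (b * w ^ (b - 1)))) w := by
    exact (((Real.hasDerivAt_rpow_const (Or.inl hw')).const_mul
      (C * x ^ a)).const_sub _)
  beta_reduce; rw [← hC]
  simp only [hdx.deriv, hdv.deriv, hdw.deriv]
  rw [Real.rpow_sub_one hx', Real.rpow_sub_one hw']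
  field_simp
  have hγn : γ * ((n : ℝ) + 1) = (n : ℝ) + 3 := by
    rw [hγ]; field_simp
  linear_combination (-(t * C * x ^ a * w ^ b)) * hab
end

section
/- Let n ∈ {0,1,2}, let γ = (n+3)/(n+1), let S : ℝ → ℝ be C¹, and let ε ∈ ℝ. Suppose a C² function φ = φ(t,s) with φ > 0 and φ_s > 0 satisfies the Lagrangian gas dynamics equation φ_tt + φ^{n(1−γ)} φ_s^{−γ} ( S'(s) − nγ S(s) φ_s/φ − γ S(s) φ_ss/φ_s ) = 0 on its domain. Then the function ψ(t,s) = (1 + εt) φ( t/(1+εt), s ), defined on the set where 1 + εt > 0 (and where (t/(1+εt), s) lies in the domain of φ), also satisfies the same equation: ψ_tt + ψ^{n(1−γ)} ψ_s^{−γ} ( S'(s) − nγ S(s) ψ_s/ψ − γ S(s) ψ_ss/ψ_s ) = 0. (This expresses that t² ∂_t + tφ ∂_φ generates an admitted symmetry group for the special value γ* = (n+3)/(n+1).) -/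
/-- for the special adiabatic exponent γ = (n+3)/(n+1), the projective
transformation ψ(t,s) = (1 + εt) φ(t/(1+εt), s) maps solutions of the Lagrangian gas
dynamics equation to solutions (wherever 1 + εt > 0). -/
theorem projective_symmetry_maps_solutions_to_solutions
    (n : ℕ) (hn : n ∈ ({0, 1, 2} : Set ℕ)) (γ : ℝ) (hγ : γ = ((n : ℝ) + 3) / ((n : ℝ) + 1))
    (S : ℝ → ℝ) (hS : ContDiff ℝ 1 S) (ε : ℝ)
    (φ : ℝ → ℝ → ℝ) (hφ : ContDiff ℝ 2 (fun q : ℝ × ℝ => φ q.1 q.2))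
    (hφpos : ∀ t s, 0 < φ t s) (hφspos : ∀ t s, 0 < pd2 φ t s)
    (hsol : ∀ t s, gasEq n γ S φ t s = 0)
    (ψ : ℝ → ℝ → ℝ)
    (hψ : ψ = fun t s => (1 + ε * t) * φ (t / (1 + ε * t)) s) :
    ∀ t s : ℝ, 0 < 1 + ε * t → gasEq n γ S ψ t s = 0 := by
  subst hψ
  intro t s ht
  have hc0 : (1 + ε * t) ≠ 0 := ne_of_gt ht
  have hΦd : Differentiable ℝ (fun q : ℝ × ℝ => φ q.1 q.2) := hφ.differentiable two_ne_zero
  have hF : ∀ y : ℝ, Differentiable ℝ (fun x => φ x y) := fun y x =>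
    by have h := (hΦd (x, y)).comp x
        (differentiableAt_id.prodMk (differentiableAt_const y) : DifferentiableAt ℝ (fun x : ℝ => (x, y)) x); exact h
  have hF' : ∀ y : ℝ, Differentiable ℝ (fun x => pd1 φ x y) := by
    have hA : ∀ x y : ℝ, pd1 φ x y = fderiv ℝ (fun q : ℝ × ℝ => φ q.1 q.2) (x, y) (1, 0) := by
      intro x y
      have h1 : HasDerivAt (fun τ : ℝ => ((τ, y) : ℝ × ℝ)) ((1 : ℝ), (0 : ℝ)) x :=
        (hasDerivAt_id x).prodMk (hasDerivAt_const x y)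
      exact ((hΦd (x, y)).hasFDerivAt.comp_hasDerivAt x h1).deriv
    intro y
    have h2 : (fun x => pd1 φ x y)
        = fun x => (fderiv ℝ (fun q : ℝ × ℝ => φ q.1 q.2) (x, y)) (1, 0) := by
      funext x; exact hA x y
    rw [h2]
    have hfd : Differentiable ℝ (fderiv ℝ (fun q : ℝ × ℝ => φ q.1 q.2)) :=
      (hφ.fderiv_right (m := 1) le_rfl).differentiable one_ne_zero
    exact (hfd.comp (differentiable_id.prodMk (differentiable_const y))).clm_apply
      (differentiable_const _)
  -- derivative of the Möbius reparametrization
  have hlin : ∀ x : ℝ, HasDerivAt (fun u : ℝ => 1 + ε * u) ε x := by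
    intro x
    simpa using ((hasDerivAt_id x).const_mul ε).const_add 1
  have hg : ∀ x : ℝ, (1 + ε * x) ≠ 0 →
      HasDerivAt (fun u : ℝ => u / (1 + ε * u)) (1 / (1 + ε * x) ^ 2) x := by
    intro x hx
    have h := (hasDerivAt_id x).div (hlin x) hx
    refine h.congr_deriv ?_
    simp only [id]
    field_simp
    ring
  -- first t-derivative of ψ
  have hψ1 : ∀ x : ℝ, (1 + ε * x) ≠ 0 →
      HasDerivAt (fun u => (1 + ε * u) * φ (u / (1 + ε * u)) s)
        (ε * φ (x / (1 + ε * x)) s + pd1 φ (x / (1 + ε * x)) s / (1 + ε * x)) x := by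
    intro x hx
    have hcomp : HasDerivAt (fun u => φ (u / (1 + ε * u)) s)
        (pd1 φ (x / (1 + ε * x)) s * (1 / (1 + ε * x) ^ 2)) x := by
      have hFd : HasDerivAt (fun v => φ v s) (pd1 φ (x / (1 + ε * x)) s) (x / (1 + ε * x)) :=
        ((hF s) _).hasDerivAt
      exact hFd.comp x (hg x hx)
    have h := (hlin x).mul hcomp
    refine h.congr_deriv ?_
    field_simp
  -- the pd2 computations
  have h2 : ∀ x y : ℝ, pd2 (fun t s => (1 + ε * t) * φ (t / (1 + ε * t)) s) x y
      = (1 + ε * x) * pd2 φ (x / (1 + ε * x)) y := by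
    intro x y
    show deriv (fun σ => (1 + ε * x) * φ (x / (1 + ε * x)) σ) y = _
    rw [deriv_const_mul_field]
    rfl
  have h3 : pd2 (pd2 (fun t s => (1 + ε * t) * φ (t / (1 + ε * t)) s)) t s
      = (1 + ε * t) * pd2 (pd2 φ) (t / (1 + ε * t)) s := by
    show deriv (fun σ => pd2 (fun t s => (1 + ε * t) * φ (t / (1 + ε * t)) s) t σ) s = _
    have : (fun σ => pd2 (fun t s => (1 + ε * t) * φ (t / (1 + ε * t)) s) t σ)
        = fun σ => (1 + ε * t) * pd2 φ (t / (1 + ε * t)) σ := by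
      funext σ; exact h2 t σ
    rw [this, deriv_const_mul_field]
    rfl
  -- second t-derivative of ψ
  have hopen : ∀ᶠ x in nhds t, (0 : ℝ) < 1 + ε * x := by
    have hcont : Continuous fun x : ℝ => 1 + ε * x := by continuity
    exact (isOpen_lt continuous_const hcont).mem_nhds ht
  have heq : (fun x => pd1 (fun t s => (1 + ε * t) * φ (t / (1 + ε * t)) s) x s)
      =ᶠ[nhds t] (fun x => ε * φ (x / (1 + ε * x)) s
        + pd1 φ (x / (1 + ε * x)) s / (1 + ε * x)) := by
    filter_upwards [hopen] with x hx
    exact (hψ1 x (ne_of_gt hx)).deriv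
  have h1 : pd1 (pd1 (fun t s => (1 + ε * t) * φ (t / (1 + ε * t)) s)) t s
      = pd1 (pd1 φ) (t / (1 + ε * t)) s / (1 + ε * t) ^ 3 := by
    have hda : HasDerivAt (fun x => ε * φ (x / (1 + ε * x)) s
        + pd1 φ (x / (1 + ε * x)) s / (1 + ε * x))
        (pd1 (pd1 φ) (t / (1 + ε * t)) s / (1 + ε * t) ^ 3) t := by
      have hterm1 : HasDerivAt (fun x => ε * φ (x / (1 + ε * x)) s)
          (ε * (pd1 φ (t / (1 + ε * t)) s * (1 / (1 + ε * t) ^ 2))) t := by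
        have hFd : HasDerivAt (fun v => φ v s) (pd1 φ (t / (1 + ε * t)) s) (t / (1 + ε * t)) :=
          ((hF s) _).hasDerivAt
        exact (hFd.comp t (hg t hc0)).const_mul ε
      have hnum : HasDerivAt (fun x => pd1 φ (x / (1 + ε * x)) s)
          (pd1 (pd1 φ) (t / (1 + ε * t)) s * (1 / (1 + ε * t) ^ 2)) t := by
        have hFd : HasDerivAt (fun v => pd1 φ v s) (pd1 (pd1 φ) (t / (1 + ε * t)) s)
            (t / (1 + ε * t)) := ((hF' s) _).hasDerivAt
        exact hFd.comp t (hg t hc0)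
      have hterm2 := hnum.div (hlin t) hc0
      have h := hterm1.add hterm2
      refine h.congr_deriv ?_
      field_simp
      ring
    calc pd1 (pd1 (fun t s => (1 + ε * t) * φ (t / (1 + ε * t)) s)) t s
        = deriv (fun x => ε * φ (x / (1 + ε * x)) s
            + pd1 φ (x / (1 + ε * x)) s / (1 + ε * x)) t := heq.deriv_eq
      _ = _ := hda.deriv
  -- assemble
  have key := hsol (t / (1 + ε * t)) s
  simp only [gasEq] at key ⊢
  rw [h1, h2 t s, h3]
  have hφ0 : φ (t / (1 + ε * t)) s ≠ 0 := ne_of_gt (hφpos _ _)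
  have hφs0 : pd2 φ (t / (1 + ε * t)) s ≠ 0 := ne_of_gt (hφspos _ _)
  have hpow : ((1 + ε * t) * φ (t / (1 + ε * t)) s) ^ ((n : ℝ) * (1 - γ))
      * ((1 + ε * t) * pd2 φ (t / (1 + ε * t)) s) ^ (-γ)
      = ((1 + ε * t) ^ 3)⁻¹ * (φ (t / (1 + ε * t)) s ^ ((n : ℝ) * (1 - γ))
        * pd2 φ (t / (1 + ε * t)) s ^ (-γ)) := by
    rw [Real.mul_rpow ht.le (hφpos _ _).le, Real.mul_rpow ht.le (hφspos _ _).le,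
      mul_mul_mul_comm, ← Real.rpow_add ht]
    have hn1 : (n : ℝ) + 1 ≠ 0 := by positivity
    have he : (n : ℝ) * (1 - γ) + (-γ) = -3 := by
      rw [hγ]; field_simp; ring
    rw [he, show ((-3 : ℝ)) = ((-3 : ℤ) : ℝ) by norm_num, Real.rpow_intCast]
    norm_num [zpow_neg]
  rw [hpow]
  have hbr : deriv S s
        - (n : ℝ) * γ * S s * ((1 + ε * t) * pd2 φ (t / (1 + ε * t)) s)
          / ((1 + ε * t) * φ (t / (1 + ε * t)) s)
        - γ * S s * ((1 + ε * t) * pd2 (pd2 φ) (t / (1 + ε * t)) s)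
          / ((1 + ε * t) * pd2 φ (t / (1 + ε * t)) s)
      = deriv S s - (n : ℝ) * γ * S s * pd2 φ (t / (1 + ε * t)) s / φ (t / (1 + ε * t)) s
        - γ * S s * pd2 (pd2 φ) (t / (1 + ε * t)) s / pd2 φ (t / (1 + ε * t)) s := by
    field_simp
  rw [hbr]
  linear_combination ((1 + ε * t) ^ 3)⁻¹ * key
end

section
/- Let n ∈ {0,1,2}, γ > 1, and let the entropy be constant, S(s) ≡ A₀ with A₀ > 0. If a C² function φ = φ(t,s) with φ > 0 and φ_s > 0 satisfies the isentropic Lagrangian gas dynamics equation φ_tt − A₀ φ^{n(1−γ)} φ_s^{−γ} ( nγ φ_s/φ + γ φ_ss/φ_s ) = 0, then the additional conservation law holds: D_t[ −φ_s φ_t ] + D_s[ (1/2)φ_t² − (γ A₀/(γ−1)) φ^{n(1−γ)} φ_s^{1−γ} ] = 0. -/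
/-- The left-hand side of the isentropic (S ≡ A₀) Lagrangian gas dynamics equation:
`φ_tt − A₀ φ^{n(1−γ)} φ_s^{−γ} ( nγ φ_s/φ + γ φ_ss/φ_s )`. -/
noncomputable def gasEqIso (n : ℕ) (γ A₀ : ℝ) (φ : ℝ → ℝ → ℝ) (t s : ℝ) : ℝ :=
  pd1 (pd1 φ) t s -
    A₀ * φ t s ^ ((n : ℝ) * (1 - γ)) * pd2 φ t s ^ (-γ) *
      ((n : ℝ) * γ * pd2 φ t s / φ t s + γ * pd2 (pd2 φ) t s / pd2 φ t s)

/-- additional conservation law in the isentropic case S(s) ≡ A₀. -/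
theorem isentropic_additional_conservation_law
    (n : ℕ) (hn : n ∈ ({0, 1, 2} : Set ℕ)) (γ : ℝ) (hγ : 1 < γ) (A₀ : ℝ) (hA₀ : 0 < A₀)
    (φ : ℝ → ℝ → ℝ) (hφ : ContDiff ℝ 2 (fun q : ℝ × ℝ => φ q.1 q.2))
    (hφpos : ∀ t s, 0 < φ t s) (hφspos : ∀ t s, 0 < pd2 φ t s)
    (hsol : ∀ t s, gasEqIso n γ A₀ φ t s = 0) :
    ∀ t s : ℝ,
      pd1 (fun t' s' => -(pd2 φ t' s' * pd1 φ t' s')) t s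
        + pd2 (fun t' s' =>
            (1 / 2) * pd1 φ t' s' ^ 2
              - (γ * A₀ / (γ - 1)) * φ t' s' ^ ((n : ℝ) * (1 - γ)) * pd2 φ t' s' ^ (1 - γ)) t s
        = 0 := by
  intro t s
  set F : ℝ × ℝ → ℝ := fun q => φ q.1 q.2 with hF
  have hFd : Differentiable ℝ F := hφ.differentiable (by norm_num)
  have h2 : ContDiff ℝ ((1:WithTop ℕ∞)+1) F := by norm_num; exact hφ
  have hf'c : ContDiff ℝ 1 (fderiv ℝ F) := (contDiff_succ_iff_fderiv.mp h2).2.2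
  have hf'd : Differentiable ℝ (fderiv ℝ F) := hf'c.differentiable (by norm_num)
  -- directional derivative lemmas
  have hDt : ∀ (v : ℝ×ℝ) (t' s' : ℝ), HasDerivAt (fun τ => fderiv ℝ F (τ, s') v)
      (fderiv ℝ (fderiv ℝ F) (t', s') (1,0) v) t' := by
    intro v t' s'
    have hc : HasDerivAt (fun τ : ℝ => (τ, s')) ((1:ℝ),(0:ℝ)) t' :=
      (hasDerivAt_id t').prodMk (hasDerivAt_const t' s')
    have h2 := (hf'd (t',s')).hasFDerivAt.comp_hasDerivAt t' hc
    exact (ContinuousLinearMap.apply ℝ ℝ v).hasFDerivAt.comp_hasDerivAt t' h2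
  have hDs : ∀ (v : ℝ×ℝ) (t' s' : ℝ), HasDerivAt (fun σ => fderiv ℝ F (t', σ) v)
      (fderiv ℝ (fderiv ℝ F) (t', s') (0,1) v) s' := by
    intro v t' s'
    have hc : HasDerivAt (fun σ : ℝ => (t', σ)) ((0:ℝ),(1:ℝ)) s' :=
      (hasDerivAt_const s' t').prodMk (hasDerivAt_id s')
    have h2 := (hf'd (t',s')).hasFDerivAt.comp_hasDerivAt s' hc
    exact (ContinuousLinearMap.apply ℝ ℝ v).hasFDerivAt.comp_hasDerivAt s' h2
  have hPt : ∀ t' s', HasDerivAt (fun τ => φ τ s') (fderiv ℝ F (t',s') (1,0)) t' := by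
    intro t' s'
    have hc : HasDerivAt (fun τ : ℝ => (τ, s')) ((1:ℝ),(0:ℝ)) t' :=
      (hasDerivAt_id t').prodMk (hasDerivAt_const t' s')
    exact (hFd (t',s')).hasFDerivAt.comp_hasDerivAt t' hc
  have hPs : ∀ t' s', HasDerivAt (fun σ => φ t' σ) (fderiv ℝ F (t',s') (0,1)) s' := by
    intro t' s'
    have hc : HasDerivAt (fun σ : ℝ => (t', σ)) ((0:ℝ),(1:ℝ)) s' :=
      (hasDerivAt_const s' t').prodMk (hasDerivAt_id s')
    exact (hFd (t',s')).hasFDerivAt.comp_hasDerivAt s' hc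
  have hp1 : ∀ t' s', pd1 φ t' s' = fderiv ℝ F (t',s') (1,0) := fun t' s' => (hPt t' s').deriv
  have hp2 : ∀ t' s', pd2 φ t' s' = fderiv ℝ F (t',s') (0,1) := fun t' s' => (hPs t' s').deriv
  -- abbreviations
  set a : ℝ := φ t s with ha
  set u : ℝ := fderiv ℝ F (t,s) (1,0) with hu
  set b : ℝ := fderiv ℝ F (t,s) (0,1) with hb
  set A11 : ℝ := fderiv ℝ (fderiv ℝ F) (t,s) (1,0) (1,0) with hA11
  set A12 : ℝ := fderiv ℝ (fderiv ℝ F) (t,s) (1,0) (0,1) with hA12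
  set A21 : ℝ := fderiv ℝ (fderiv ℝ F) (t,s) (0,1) (1,0) with hA21
  set A22 : ℝ := fderiv ℝ (fderiv ℝ F) (t,s) (0,1) (0,1) with hA22
  have hapos : 0 < a := hφpos t s
  have hbpos : 0 < b := by rw [hb, ← hp2]; exact hφspos t s
  have hsym : A21 = A12 :=
    second_derivative_symmetric (fun q => (hFd q).hasFDerivAt) ((hf'd (t,s)).hasFDerivAt) (0,1) (1,0)
  set e : ℝ := (n : ℝ) * (1 - γ) with he
  set C : ℝ := γ * A₀ / (γ - 1) with hC
  -- D_t part
  have hG : HasDerivAt (fun τ => -(pd2 φ τ s * pd1 φ τ s)) (-(A12 * u + b * A11)) t := by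
    have h := ((hDt (0,1) t s).mul (hDt (1,0) t s)).neg
    simp only [hp1, hp2]
    exact h
  have hpd1G : pd1 (fun t' s' => -(pd2 φ t' s' * pd1 φ t' s')) t s = -(A12 * u + b * A11) :=
    hG.deriv
  -- D_s part
  have hsq : HasDerivAt (fun σ => (1/2 : ℝ) * pd1 φ t σ ^ 2) ((1/2 : ℝ) * ((2:ℕ) * u ^ (2-1) * A21)) s := by
    have h := ((hDs (1,0) t s).pow 2).const_mul (1/2 : ℝ)
    simp only [hp1]
    exact h
  have hrw1 : HasDerivAt (fun σ => φ t σ ^ e) (b * e * a ^ (e - 1)) s :=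
    (hPs t s).rpow_const (Or.inl hapos.ne')
  have hrw2 : HasDerivAt (fun σ => pd2 φ t σ ^ (1 - γ)) (A22 * (1 - γ) * b ^ (1 - γ - 1)) s := by
    have h := (hDs (0,1) t s).rpow_const (p := 1 - γ) (Or.inl hbpos.ne')
    simp only [hp2]
    exact h
  have hprod : HasDerivAt (fun σ => C * φ t σ ^ e * pd2 φ t σ ^ (1 - γ))
      (C * ((b * e * a ^ (e - 1)) * b ^ (1 - γ) + a ^ e * (A22 * (1 - γ) * b ^ (1 - γ - 1)))) s := by
    have h : HasDerivAt (fun σ => C * (φ t σ ^ e * pd2 φ t σ ^ (1 - γ))) _ s := ((hrw1.mul hrw2).const_mul C)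
    have hfe : (fun σ => C * (φ t σ ^ e * pd2 φ t σ ^ (1 - γ)))
        = fun σ => C * φ t σ ^ e * pd2 φ t σ ^ (1 - γ) := by
      funext σ; ring
    rw [hfe, ← ha] at h
    rw [show pd2 φ t s = b from hp2 t s] at h
    exact h
  have hH : HasDerivAt (fun σ => (1/2 : ℝ) * pd1 φ t σ ^ 2 - C * φ t σ ^ e * pd2 φ t σ ^ (1 - γ))
      ((1/2 : ℝ) * ((2:ℕ) * u ^ (2-1) * A21)
        - C * ((b * e * a ^ (e - 1)) * b ^ (1 - γ) + a ^ e * (A22 * (1 - γ) * b ^ (1 - γ - 1)))) s :=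
    hsq.sub hprod
  have hpd2H : pd2 (fun t' s' => (1/2 : ℝ) * pd1 φ t' s' ^ 2
      - C * φ t' s' ^ e * pd2 φ t' s' ^ (1 - γ)) t s
      = (1/2 : ℝ) * ((2:ℕ) * u ^ (2-1) * A21)
        - C * ((b * e * a ^ (e - 1)) * b ^ (1 - γ) + a ^ e * (A22 * (1 - γ) * b ^ (1 - γ - 1))) :=
    hH.deriv
  -- the equation
  have heq : A11 = A₀ * a ^ e * b ^ (-γ) * ((n : ℝ) * γ * b / a + γ * A22 / b) := by
    have h := hsol t s
    unfold gasEqIso at h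
    have h11 : pd1 (pd1 φ) t s = A11 := by
      have hfe : (fun τ => pd1 φ τ s) = fun τ => fderiv ℝ F (τ, s) (1,0) := funext fun τ => hp1 τ s
      show deriv (fun τ => pd1 φ τ s) t = A11
      rw [hfe]; exact (hDt (1,0) t s).deriv
    have h22 : pd2 (pd2 φ) t s = A22 := by
      have hfe : (fun σ => pd2 φ t σ) = fun σ => fderiv ℝ F (t, σ) (0,1) := funext fun σ => hp2 t σ
      show deriv (fun σ => pd2 φ t σ) s = A22
      rw [hfe]; exact (hDs (0,1) t s).deriv
    rw [h11, h22, hp2, ← hb, ← ha, ← he] at h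
    linarith
  -- final algebra
  rw [hpd1G, hpd2H, hsym, heq]
  have hb1 : b ^ (1 - γ) = b * b ^ (-γ) := by
    rw [show (1 - γ) = 1 + (-γ) by ring, Real.rpow_add hbpos, Real.rpow_one]
  have hb2 : b ^ (1 - γ - 1) = b ^ (-γ) := by norm_num
  have ha1 : a ^ (e - 1) = a ^ e / a := by
    rw [Real.rpow_sub hapos, Real.rpow_one]
  rw [hb1, hb2, ha1, hC, he]
  have hγ1 : γ - 1 ≠ 0 := by linarith
  field_simp
  ring
end

section
/- Let n ∈ {0,1,2}, γ > 1, and let the entropy be constant, S(s) ≡ A₀ with A₀ > 0. If a C² function φ = φ(t,s) with φ > 0 and φ_s > 0 satisfies the isentropic Lagrangian gas dynamics equation φ_tt − A₀ φ^{n(1−γ)} φ_s^{−γ} ( nγ φ_s/φ + γ φ_ss/φ_s ) = 0, then the following conservation law holds: D_t[ −((n+3)γ−n−1) t ( (1/2)φ_t² + (A₀/(γ−1)) φ^{n(1−γ)} φ_s^{1−γ} ) − ((n+1)γ−n−3) s φ_s φ_t + (γ+1) φ φ_t ] + D_s[ −((n+3)γ−n−1) t A₀ φ^{n(1−γ)}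 φ_t φ_s^{−γ} + ((n+1)γ−n−3) s ( (1/2)φ_t² − (γ A₀/(γ−1)) φ^{n(1−γ)} φ_s^{1−γ} ) + (γ+1) A₀ φ^{−nγ+n+1} φ_s^{−γ} ] = 0. -/
private lemma hasDerivAt_comp_fst {G : ℝ × ℝ → ℝ} {t s : ℝ}
    (hG : DifferentiableAt ℝ G (t, s)) :
    HasDerivAt (fun τ => G (τ, s)) (fderiv ℝ G (t, s) (1, 0)) t :=
  hG.hasFDerivAt.comp_hasDerivAt t ((hasDerivAt_id t).prodMk (hasDerivAt_const t s))

private lemma hasDerivAt_comp_snd {G : ℝ × ℝ → ℝ} {t s : ℝ}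
    (hG : DifferentiableAt ℝ G (t, s)) :
    HasDerivAt (fun σ => G (t, σ)) (fderiv ℝ G (t, s) (0, 1)) s :=
  hG.hasFDerivAt.comp_hasDerivAt s ((hasDerivAt_const s t).prodMk (hasDerivAt_id s))

private lemma congr_deriv {f : ℝ → ℝ} {d d' x : ℝ} (h : HasDerivAt f d x) (hd : d' = d) :
    HasDerivAt f d' x := hd ▸ h

set_option maxHeartbeats 2000000

/-- second additional conservation law in the isentropic case S(s) ≡ A₀. -/
theorem isentropic_second_additional_conservation_law
    (n : ℕ) (hn : n ∈ ({0, 1, 2} : Set ℕ)) (γ : ℝ) (hγ : 1 < γ) (A₀ : ℝ) (hA₀ : 0 < A₀)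
    (φ : ℝ → ℝ → ℝ) (hφ : ContDiff ℝ 2 (fun q : ℝ × ℝ => φ q.1 q.2))
    (hφpos : ∀ t s, 0 < φ t s) (hφspos : ∀ t s, 0 < pd2 φ t s)
    (hsol : ∀ t s, gasEqIso n γ A₀ φ t s = 0) :
    ∀ t s : ℝ,
      pd1 (fun t' s' =>
          -((((n : ℝ) + 3) * γ - (n : ℝ) - 1) * t')
              * ((1 / 2) * pd1 φ t' s' ^ 2
                  + (A₀ / (γ - 1)) * φ t' s' ^ ((n : ℝ) * (1 - γ)) * pd2 φ t' s' ^ (1 - γ))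
            - (((n : ℝ) + 1) * γ - (n : ℝ) - 3) * s' * pd2 φ t' s' * pd1 φ t' s'
            + (γ + 1) * φ t' s' * pd1 φ t' s') t s
        + pd2 (fun t' s' =>
            -((((n : ℝ) + 3) * γ - (n : ℝ) - 1) * t')
                * A₀ * φ t' s' ^ ((n : ℝ) * (1 - γ)) * pd1 φ t' s' * pd2 φ t' s' ^ (-γ)
              + (((n : ℝ) + 1) * γ - (n : ℝ) - 3) * s'
                  * ((1 / 2) * pd1 φ t' s' ^ 2
                      - (γ * A₀ / (γ - 1)) * φ t' s' ^ ((n : ℝ) * (1 - γ)) * pd2 φ t' s' ^ (1 - γ))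
              + (γ + 1) * A₀ * φ t' s' ^ (-(n : ℝ) * γ + (n : ℝ) + 1) * pd2 φ t' s' ^ (-γ)) t s
        = 0 := by
  intro t s
  set F : ℝ × ℝ → ℝ := fun q => φ q.1 q.2 with hFdef
  have hF1 : ContDiff ℝ 1 F := hφ.of_le one_le_two
  have hdF : Differentiable ℝ F := hF1.differentiable one_ne_zero
  have hfd : ContDiff ℝ 1 (fderiv ℝ F) := hφ.fderiv_right (by norm_num : (1 : WithTop ℕ∞) + 1 ≤ 2)
  have hg1 : ContDiff ℝ 1 (fun q : ℝ × ℝ => fderiv ℝ F q (1, 0)) := hfd.clm_apply contDiff_const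
  have hg2 : ContDiff ℝ 1 (fun q : ℝ × ℝ => fderiv ℝ F q (0, 1)) := hfd.clm_apply contDiff_const
  have hp1 : ∀ t s : ℝ, pd1 φ t s = fderiv ℝ F (t, s) (1, 0) := fun t s =>
    (hasDerivAt_comp_fst (hdF (t, s))).deriv
  have hp2 : ∀ t s : ℝ, pd2 φ t s = fderiv ℝ F (t, s) (0, 1) := fun t s =>
    (hasDerivAt_comp_snd (hdF (t, s))).deriv
  have eq1t : (fun τ => pd1 φ τ s) = fun τ => fderiv ℝ F (τ, s) (1, 0) :=
    funext fun τ => hp1 τ s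
  have eq2t : (fun τ => pd2 φ τ s) = fun τ => fderiv ℝ F (τ, s) (0, 1) :=
    funext fun τ => hp2 τ s
  have eq1s : (fun σ => pd1 φ t σ) = fun σ => fderiv ℝ F (t, σ) (1, 0) :=
    funext fun σ => hp1 t σ
  have eq2s : (fun σ => pd2 φ t σ) = fun σ => fderiv ℝ F (t, σ) (0, 1) :=
    funext fun σ => hp2 t σ
  -- basic HasDerivAt facts
  have HB : HasDerivAt (fun τ => φ τ s) (pd1 φ t s) t := by
    rw [hp1]; exact hasDerivAt_comp_fst (hdF (t, s))
  have HC : HasDerivAt (fun σ => φ t σ) (pd2 φ t s) s := by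
    rw [hp2]; exact hasDerivAt_comp_snd (hdF (t, s))
  have HBT : HasDerivAt (fun τ => pd1 φ τ s) (pd1 (pd1 φ) t s) t := by
    have h := hasDerivAt_comp_fst (hg1.differentiable one_ne_zero (t, s))
    rw [← eq1t] at h
    have e : pd1 (pd1 φ) t s = _ := h.deriv
    rw [e]; exact h
  have HCT : HasDerivAt (fun τ => pd2 φ τ s) (pd1 (pd2 φ) t s) t := by
    have h := hasDerivAt_comp_fst (hg2.differentiable one_ne_zero (t, s))
    rw [← eq2t] at h
    have e : pd1 (pd2 φ) t s = _ := h.deriv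
    rw [e]; exact h
  have HBS : HasDerivAt (fun σ => pd1 φ t σ) (pd2 (pd1 φ) t s) s := by
    have h := hasDerivAt_comp_snd (hg1.differentiable one_ne_zero (t, s))
    rw [← eq1s] at h
    have e : pd2 (pd1 φ) t s = _ := h.deriv
    rw [e]; exact h
  have HCS : HasDerivAt (fun σ => pd2 φ t σ) (pd2 (pd2 φ) t s) s := by
    have h := hasDerivAt_comp_snd (hg2.differentiable one_ne_zero (t, s))
    rw [← eq2s] at h
    have e : pd2 (pd2 φ) t s = _ := h.deriv
    rw [e]; exact h
  -- symmetry of second derivatives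
  have hdfd : DifferentiableAt ℝ (fderiv ℝ F) (t, s) := hfd.differentiable one_ne_zero (t, s)
  have hsymm : pd1 (pd2 φ) t s = pd2 (pd1 φ) t s := by
    have hder : ∀ y, HasFDerivAt F (fderiv ℝ F y) y := fun y => (hdF y).hasFDerivAt
    have hsym := second_derivative_symmetric hder hdfd.hasFDerivAt
      (((1 : ℝ), (0 : ℝ))) (((0 : ℝ), (1 : ℝ)))
    have k1 : pd1 (pd2 φ) t s
        = fderiv ℝ (fun q : ℝ × ℝ => fderiv ℝ F q (0, 1)) (t, s) (1, 0) := by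
      have h := hasDerivAt_comp_fst (hg2.differentiable one_ne_zero (t, s))
      rw [← eq2t] at h
      exact h.deriv
    have k2 : pd2 (pd1 φ) t s
        = fderiv ℝ (fun q : ℝ × ℝ => fderiv ℝ F q (1, 0)) (t, s) (0, 1) := by
      have h := hasDerivAt_comp_snd (hg1.differentiable one_ne_zero (t, s))
      rw [← eq1s] at h
      exact h.deriv
    rw [k1, k2, fderiv_clm_apply hdfd (differentiableAt_const _),
      fderiv_clm_apply hdfd (differentiableAt_const _)]
    simpa using hsym
  -- positivity
  have ha := (hφpos t s).ne'
  have hc := (hφspos t s).ne'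
  -- derived HasDerivAt facts (t-direction)
  have HAM : HasDerivAt (fun τ => φ τ s ^ ((n : ℝ) * (1 - γ)))
      (pd1 φ t s * ((n : ℝ) * (1 - γ)) * φ t s ^ ((n : ℝ) * (1 - γ) - 1)) t :=
    HB.rpow_const (Or.inl ha)
  have HC1 : HasDerivAt (fun τ => pd2 φ τ s ^ (1 - γ))
      (pd1 (pd2 φ) t s * (1 - γ) * pd2 φ t s ^ (1 - γ - 1)) t :=
    HCT.rpow_const (Or.inl hc)
  -- derived HasDerivAt facts (s-direction)
  have HAMs : HasDerivAt (fun σ => φ t σ ^ ((n : ℝ) * (1 - γ)))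
      (pd2 φ t s * ((n : ℝ) * (1 - γ)) * φ t s ^ ((n : ℝ) * (1 - γ) - 1)) s :=
    HC.rpow_const (Or.inl ha)
  have HC1s : HasDerivAt (fun σ => pd2 φ t σ ^ (1 - γ))
      (pd2 (pd2 φ) t s * (1 - γ) * pd2 φ t s ^ (1 - γ - 1)) s :=
    HCS.rpow_const (Or.inl hc)
  have HQs : HasDerivAt (fun σ => pd2 φ t σ ^ (-γ))
      (pd2 (pd2 φ) t s * (-γ) * pd2 φ t s ^ (-γ - 1)) s :=
    HCS.rpow_const (Or.inl hc)
  have HAPs : HasDerivAt (fun σ => φ t σ ^ (-(n : ℝ) * γ + (n : ℝ) + 1))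
      (pd2 φ t s * (-(n : ℝ) * γ + (n : ℝ) + 1) * φ t s ^ (-(n : ℝ) * γ + (n : ℝ) + 1 - 1)) s :=
    HC.rpow_const (Or.inl ha)
  -- the t-derivative of the first flux
  have HT : HasDerivAt (fun τ : ℝ =>
      -((((n : ℝ) + 3) * γ - (n : ℝ) - 1) * τ)
          * ((1 / 2) * pd1 φ τ s ^ 2
              + (A₀ / (γ - 1)) * φ τ s ^ ((n : ℝ) * (1 - γ)) * pd2 φ τ s ^ (1 - γ))
        - (((n : ℝ) + 1) * γ - (n : ℝ) - 3) * s * pd2 φ τ s * pd1 φ τ s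
        + (γ + 1) * φ τ s * pd1 φ τ s)
      (-((((n : ℝ) + 3) * γ - (n : ℝ) - 1))
          * ((1 / 2) * pd1 φ t s ^ 2
              + (A₀ / (γ - 1)) * φ t s ^ ((n : ℝ) * (1 - γ)) * pd2 φ t s ^ (1 - γ))
        - ((((n : ℝ) + 3) * γ - (n : ℝ) - 1) * t)
          * (pd1 φ t s * pd1 (pd1 φ) t s
              + (A₀ / (γ - 1)) * (pd1 φ t s * ((n : ℝ) * (1 - γ)) * φ t s ^ ((n : ℝ) * (1 - γ) - 1)
                    * pd2 φ t s ^ (1 - γ)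
                  + φ t s ^ ((n : ℝ) * (1 - γ))
                    * (pd1 (pd2 φ) t s * (1 - γ) * pd2 φ t s ^ (1 - γ - 1))))
        - (((n : ℝ) + 1) * γ - (n : ℝ) - 3) * s
            * (pd1 (pd2 φ) t s * pd1 φ t s + pd2 φ t s * pd1 (pd1 φ) t s)
        + (γ + 1) * (pd1 φ t s * pd1 φ t s + φ t s * pd1 (pd1 φ) t s)) t := by
    have T1 := ((hasDerivAt_id t).const_mul ((((n : ℝ) + 3) * γ - (n : ℝ) - 1))).neg.mul
        (((HBT.pow 2).const_mul (1 / 2)).add ((HAM.const_mul (A₀ / (γ - 1))).mul HC1))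
    have T2 := (HCT.const_mul ((((n : ℝ) + 1) * γ - (n : ℝ) - 3) * s)).mul HBT
    have T3 := (HB.const_mul (γ + 1)).mul HBT
    exact congr_deriv ((T1.sub T2).add T3) (by push_cast; simp only [id_eq, Pi.add_apply, Pi.sub_apply, Pi.mul_apply, Pi.pow_apply, Pi.neg_apply]; ring)
  -- the s-derivative of the second flux
  have HS : HasDerivAt (fun σ : ℝ =>
      -((((n : ℝ) + 3) * γ - (n : ℝ) - 1) * t)
          * A₀ * φ t σ ^ ((n : ℝ) * (1 - γ)) * pd1 φ t σ * pd2 φ t σ ^ (-γ)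
        + (((n : ℝ) + 1) * γ - (n : ℝ) - 3) * σ
            * ((1 / 2) * pd1 φ t σ ^ 2
                - (γ * A₀ / (γ - 1)) * φ t σ ^ ((n : ℝ) * (1 - γ)) * pd2 φ t σ ^ (1 - γ))
        + (γ + 1) * A₀ * φ t σ ^ (-(n : ℝ) * γ + (n : ℝ) + 1) * pd2 φ t σ ^ (-γ))
      ((-((((n : ℝ) + 3) * γ - (n : ℝ) - 1) * t) * A₀)
          * ((pd2 φ t s * ((n : ℝ) * (1 - γ)) * φ t s ^ ((n : ℝ) * (1 - γ) - 1)) * pd1 φ t s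
                * pd2 φ t s ^ (-γ)
              + φ t s ^ ((n : ℝ) * (1 - γ)) * pd2 (pd1 φ) t s * pd2 φ t s ^ (-γ)
              + φ t s ^ ((n : ℝ) * (1 - γ)) * pd1 φ t s
                  * (pd2 (pd2 φ) t s * (-γ) * pd2 φ t s ^ (-γ - 1)))
        + (((n : ℝ) + 1) * γ - (n : ℝ) - 3)
            * ((1 / 2) * pd1 φ t s ^ 2
                - (γ * A₀ / (γ - 1)) * φ t s ^ ((n : ℝ) * (1 - γ)) * pd2 φ t s ^ (1 - γ))
        + (((n : ℝ) + 1) * γ - (n : ℝ) - 3) * s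
            * (pd1 φ t s * pd2 (pd1 φ) t s
                - (γ * A₀ / (γ - 1))
                    * ((pd2 φ t s * ((n : ℝ) * (1 - γ)) * φ t s ^ ((n : ℝ) * (1 - γ) - 1))
                          * pd2 φ t s ^ (1 - γ)
                        + φ t s ^ ((n : ℝ) * (1 - γ))
                          * (pd2 (pd2 φ) t s * (1 - γ) * pd2 φ t s ^ (1 - γ - 1))))
        + (γ + 1) * A₀
            * ((pd2 φ t s * (-(n : ℝ) * γ + (n : ℝ) + 1)
                    * φ t s ^ (-(n : ℝ) * γ + (n : ℝ) + 1 - 1)) * pd2 φ t s ^ (-γ)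
                + φ t s ^ (-(n : ℝ) * γ + (n : ℝ) + 1)
                    * (pd2 (pd2 φ) t s * (-γ) * pd2 φ t s ^ (-γ - 1)))) s := by
    have T1 := ((HAMs.const_mul
        (-((((n : ℝ) + 3) * γ - (n : ℝ) - 1) * t) * A₀)).mul HBS).mul HQs
    have T2 := ((hasDerivAt_id s).const_mul ((((n : ℝ) + 1) * γ - (n : ℝ) - 3))).mul
        (((HBS.pow 2).const_mul (1 / 2)).sub
          ((HAMs.const_mul (γ * A₀ / (γ - 1))).mul HC1s))
    have T3 := (HAPs.const_mul ((γ + 1) * A₀)).mul HQs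
    exact congr_deriv ((T1.add T2).add T3) (by push_cast; simp only [id_eq, Pi.add_apply, Pi.sub_apply, Pi.mul_apply, Pi.pow_apply, Pi.neg_apply]; ring)
  -- rewrite the goal using the computed derivatives
  have E1 : pd1 (fun t' s' =>
      -((((n : ℝ) + 3) * γ - (n : ℝ) - 1) * t')
          * ((1 / 2) * pd1 φ t' s' ^ 2
              + (A₀ / (γ - 1)) * φ t' s' ^ ((n : ℝ) * (1 - γ)) * pd2 φ t' s' ^ (1 - γ))
        - (((n : ℝ) + 1) * γ - (n : ℝ) - 3) * s' * pd2 φ t' s' * pd1 φ t' s'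
        + (γ + 1) * φ t' s' * pd1 φ t' s') t s = _ := HT.deriv
  have E2 : pd2 (fun t' s' =>
      -((((n : ℝ) + 3) * γ - (n : ℝ) - 1) * t')
          * A₀ * φ t' s' ^ ((n : ℝ) * (1 - γ)) * pd1 φ t' s' * pd2 φ t' s' ^ (-γ)
        + (((n : ℝ) + 1) * γ - (n : ℝ) - 3) * s'
            * ((1 / 2) * pd1 φ t' s' ^ 2
                - (γ * A₀ / (γ - 1)) * φ t' s' ^ ((n : ℝ) * (1 - γ)) * pd2 φ t' s' ^ (1 - γ))
        + (γ + 1) * A₀ * φ t' s' ^ (-(n : ℝ) * γ + (n : ℝ) + 1) * pd2 φ t' s' ^ (-γ)) t s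
      = _ := HS.deriv
  rw [E1, E2]
  -- use the PDE and the symmetry of mixed partials
  have hbtt : pd1 (pd1 φ) t s
      = A₀ * φ t s ^ ((n : ℝ) * (1 - γ)) * pd2 φ t s ^ (-γ) *
          ((n : ℝ) * γ * pd2 φ t s / φ t s + γ * pd2 (pd2 φ) t s / pd2 φ t s) := by
    have h := hsol t s
    unfold gasEqIso at h
    linarith
  rw [hbtt, hsymm]
  -- rpow manipulations
  have rw1 : φ t s ^ ((n : ℝ) * (1 - γ) - 1) = φ t s ^ ((n : ℝ) * (1 - γ)) / φ t s := by
    rw [Real.rpow_sub (hφpos t s), Real.rpow_one]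
  have rw2 : pd2 φ t s ^ (1 - γ - 1) = pd2 φ t s ^ (-γ) := by
    rw [show (1 : ℝ) - γ - 1 = -γ by ring]
  have rw3 : pd2 φ t s ^ (1 - γ) = pd2 φ t s * pd2 φ t s ^ (-γ) := by
    rw [show (1 : ℝ) - γ = 1 + -γ by ring, Real.rpow_add (hφspos t s), Real.rpow_one]
  have rw4 : pd2 φ t s ^ (-γ - 1) = pd2 φ t s ^ (-γ) / pd2 φ t s := by
    rw [Real.rpow_sub (hφspos t s), Real.rpow_one]
  have rw5 : φ t s ^ (-(n : ℝ) * γ + (n : ℝ) + 1 - 1) = φ t s ^ ((n : ℝ) * (1 - γ)) := by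
    rw [show -(n : ℝ) * γ + (n : ℝ) + 1 - 1 = (n : ℝ) * (1 - γ) by ring]
  have rw6 : φ t s ^ (-(n : ℝ) * γ + (n : ℝ) + 1) = φ t s * φ t s ^ ((n : ℝ) * (1 - γ)) := by
    rw [show -(n : ℝ) * γ + (n : ℝ) + 1 = 1 + (n : ℝ) * (1 - γ) by ring,
      Real.rpow_add (hφpos t s), Real.rpow_one]
  rw [rw1, rw2, rw3, rw4, rw5, rw6]
  have hγ1 : γ - 1 ≠ 0 := sub_ne_zero.mpr hγ.ne'
  field_simp
  ring
end

section
/- Let n ∈ {0,1,2}, γ > 1, q ≠ 0, A₀ > 0, and let the entropy be S(s) = A₀ s^q (on a domain where s > 0). If a C² function φ = φ(t,s) with φ > 0 and φ_s > 0 satisfies the Lagrangian gas dynamics equation φ_tt + φ^{n(1−γ)} φ_s^{−γ} ( S'(s) − nγ S(s) φ_s/φ − γ S(s) φ_ss/φ_s ) = 0 with this S, then the additional conservation law holds: D_t[ −((n+3)γ+2q−n−1) t ( (1/2)φ_t² + (S(s)/(γ−1)) φ^{n(1−γ)} φ_s^{1−γ} ) − ((n+1)γ−n−3) s φ_s φ_t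 + (γ+q+1) φ φ_t ] + D_s[ −((n+3)γ+2q−n−1) t S(s) φ^{n(1−γ)} φ_t φ_s^{−γ} + ((n+1)γ−n−3) s ( (1/2)φ_t² − (γ S(s)/(γ−1)) φ^{n(1−γ)} φ_s^{1−γ} ) + (γ+q+1) S(s) φ^{−nγ+n+1} φ_s^{−γ} ] = 0. -/
section helpers
variable {E : Type*} [NormedAddCommGroup E] [NormedSpace ℝ E]

lemma hdFst (G : ℝ × ℝ → E) (hG : Differentiable ℝ G) (t s : ℝ) :
    HasDerivAt (fun τ => G (τ, s)) (fderiv ℝ G (t, s) (1, 0)) t :=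
  (hG (t, s)).hasFDerivAt.comp_hasDerivAt t
    ((hasDerivAt_id t).prodMk (hasDerivAt_const t s))

lemma hdSnd (G : ℝ × ℝ → E) (hG : Differentiable ℝ G) (t s : ℝ) :
    HasDerivAt (fun σ => G (t, σ)) (fderiv ℝ G (t, s) (0, 1)) s :=
  (hG (t, s)).hasFDerivAt.comp_hasDerivAt s
    ((hasDerivAt_const s t).prodMk (hasDerivAt_id s))

end helpers

section pdlemmas
variable (φ : ℝ → ℝ → ℝ) (hφ : ContDiff ℝ 2 (fun p : ℝ × ℝ => φ p.1 p.2)) (t s : ℝ)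
include hφ

lemma hd_phi_t : HasDerivAt (fun τ => φ τ s) (pd1 φ t s) t := by
  have h := hdFst (fun p : ℝ × ℝ => φ p.1 p.2) (hφ.differentiable (by norm_num)) t s
  have e : pd1 φ t s = fderiv ℝ (fun p : ℝ × ℝ => φ p.1 p.2) (t, s) (1, 0) := h.deriv
  rw [e]; exact h

lemma hd_phi_s : HasDerivAt (fun σ => φ t σ) (pd2 φ t s) s := by
  have h := hdSnd (fun p : ℝ × ℝ => φ p.1 p.2) (hφ.differentiable (by norm_num)) t s
  have e : pd2 φ t s = fderiv ℝ (fun p : ℝ × ℝ => φ p.1 p.2) (t, s) (0, 1) := h.deriv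
  rw [e]; exact h

lemma pd1_eq : ∀ a b : ℝ, pd1 φ a b
    = fderiv ℝ (fun p : ℝ × ℝ => φ p.1 p.2) (a, b) (1, 0) :=
  fun a b => (hdFst (fun p : ℝ × ℝ => φ p.1 p.2) (hφ.differentiable (by norm_num)) a b).deriv

lemma pd2_eq : ∀ a b : ℝ, pd2 φ a b
    = fderiv ℝ (fun p : ℝ × ℝ => φ p.1 p.2) (a, b) (0, 1) :=
  fun a b => (hdSnd (fun p : ℝ × ℝ => φ p.1 p.2) (hφ.differentiable (by norm_num)) a b).deriv

lemma hd_pd1_t : HasDerivAt (fun τ => pd1 φ τ s) (pd1 (pd1 φ) t s) t := by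
  have hF' : ContDiff ℝ 1 (fderiv ℝ (fun p : ℝ × ℝ => φ p.1 p.2)) :=
    hφ.fderiv_right (by norm_num)
  have hFt : Differentiable ℝ (fun p : ℝ × ℝ =>
      fderiv ℝ (fun p : ℝ × ℝ => φ p.1 p.2) p (1, 0)) :=
    (hF'.clm_apply contDiff_const).differentiable one_ne_zero
  have e : (fun τ => pd1 φ τ s) = fun τ =>
      fderiv ℝ (fun p : ℝ × ℝ => φ p.1 p.2) (τ, s) (1, 0) :=
    funext fun τ => pd1_eq φ hφ τ s
  have h := hdFst _ hFt t s
  have hval : pd1 (pd1 φ) t s = fderiv ℝ (fun p : ℝ × ℝ =>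
      fderiv ℝ (fun p : ℝ × ℝ => φ p.1 p.2) p (1, 0)) (t, s) (1, 0) := by
    show deriv (fun τ => pd1 φ τ s) t = _
    rw [e]; exact h.deriv
  rw [hval, e]; exact h

lemma hd_pd2_t : HasDerivAt (fun τ => pd2 φ τ s) (pd1 (pd2 φ) t s) t := by
  have hF' : ContDiff ℝ 1 (fderiv ℝ (fun p : ℝ × ℝ => φ p.1 p.2)) :=
    hφ.fderiv_right (by norm_num)
  have hFs : Differentiable ℝ (fun p : ℝ × ℝ =>
      fderiv ℝ (fun p : ℝ × ℝ => φ p.1 p.2) p (0, 1)) :=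
    (hF'.clm_apply contDiff_const).differentiable one_ne_zero
  have e : (fun τ => pd2 φ τ s) = fun τ =>
      fderiv ℝ (fun p : ℝ × ℝ => φ p.1 p.2) (τ, s) (0, 1) :=
    funext fun τ => pd2_eq φ hφ τ s
  have h := hdFst _ hFs t s
  have hval : pd1 (pd2 φ) t s = fderiv ℝ (fun p : ℝ × ℝ =>
      fderiv ℝ (fun p : ℝ × ℝ => φ p.1 p.2) p (0, 1)) (t, s) (1, 0) := by
    show deriv (fun τ => pd2 φ τ s) t = _
    rw [e]; exact h.deriv
  rw [hval, e]; exact h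

lemma hd_pd2_s : HasDerivAt (fun σ => pd2 φ t σ) (pd2 (pd2 φ) t s) s := by
  have hF' : ContDiff ℝ 1 (fderiv ℝ (fun p : ℝ × ℝ => φ p.1 p.2)) :=
    hφ.fderiv_right (by norm_num)
  have hFs : Differentiable ℝ (fun p : ℝ × ℝ =>
      fderiv ℝ (fun p : ℝ × ℝ => φ p.1 p.2) p (0, 1)) :=
    (hF'.clm_apply contDiff_const).differentiable one_ne_zero
  have e : (fun σ => pd2 φ t σ) = fun σ =>
      fderiv ℝ (fun p : ℝ × ℝ => φ p.1 p.2) (t, σ) (0, 1) :=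
    funext fun σ => pd2_eq φ hφ t σ
  have h := hdSnd _ hFs t s
  have hval : pd2 (pd2 φ) t s = fderiv ℝ (fun p : ℝ × ℝ =>
      fderiv ℝ (fun p : ℝ × ℝ => φ p.1 p.2) p (0, 1)) (t, s) (0, 1) := by
    show deriv (fun σ => pd2 φ t σ) s = _
    rw [e]; exact h.deriv
  rw [hval, e]; exact h

lemma hd_pd1_s : HasDerivAt (fun σ => pd1 φ t σ) (pd1 (pd2 φ) t s) s := by
  have hF' : ContDiff ℝ 1 (fderiv ℝ (fun p : ℝ × ℝ => φ p.1 p.2)) :=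
    hφ.fderiv_right (by norm_num)
  have hF'd : Differentiable ℝ (fderiv ℝ (fun p : ℝ × ℝ => φ p.1 p.2)) :=
    hF'.differentiable one_ne_zero
  -- derivative of σ ↦ Ft (t, σ) is f'' (0,1) (1,0)
  have hB : HasDerivAt (fun σ => fderiv ℝ (fun p : ℝ × ℝ => φ p.1 p.2) (t, σ) (1, 0))
      (fderiv ℝ (fderiv ℝ (fun p : ℝ × ℝ => φ p.1 p.2)) (t, s) (0, 1) (1, 0)) s := by
    have hc := hdSnd (fderiv ℝ (fun p : ℝ × ℝ => φ p.1 p.2)) hF'd t s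
    simpa using hc.clm_apply (hasDerivAt_const s (((1 : ℝ), (0 : ℝ))))
  -- derivative of τ ↦ Fs (τ, s) is f'' (1,0) (0,1)
  have hC : HasDerivAt (fun τ => fderiv ℝ (fun p : ℝ × ℝ => φ p.1 p.2) (τ, s) (0, 1))
      (fderiv ℝ (fderiv ℝ (fun p : ℝ × ℝ => φ p.1 p.2)) (t, s) (1, 0) (0, 1)) t := by
    have hc := hdFst (fderiv ℝ (fun p : ℝ × ℝ => φ p.1 p.2)) hF'd t s
    simpa using hc.clm_apply (hasDerivAt_const t (((0 : ℝ), (1 : ℝ))))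
  have hsym : fderiv ℝ (fderiv ℝ (fun p : ℝ × ℝ => φ p.1 p.2)) (t, s) (0, 1) (1, 0)
      = fderiv ℝ (fderiv ℝ (fun p : ℝ × ℝ => φ p.1 p.2)) (t, s) (1, 0) (0, 1) :=
    second_derivative_symmetric
      (fun y => ((hφ.differentiable (by norm_num)) y).hasFDerivAt)
      ((hF'd (t, s)).hasFDerivAt) _ _
  have e1 : (fun σ => pd1 φ t σ) = fun σ =>
      fderiv ℝ (fun p : ℝ × ℝ => φ p.1 p.2) (t, σ) (1, 0) :=
    funext fun σ => pd1_eq φ hφ t σ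
  have e2 : (fun τ => pd2 φ τ s) = fun τ =>
      fderiv ℝ (fun p : ℝ × ℝ => φ p.1 p.2) (τ, s) (0, 1) :=
    funext fun τ => pd2_eq φ hφ τ s
  have hval : pd1 (pd2 φ) t s
      = fderiv ℝ (fderiv ℝ (fun p : ℝ × ℝ => φ p.1 p.2)) (t, s) (1, 0) (0, 1) := by
    show deriv (fun τ => pd2 φ τ s) t = _
    rw [e2]; exact hC.deriv
  rw [hval, ← hsym, e1]; exact hB

end pdlemmas

set_option maxHeartbeats 3200000 in
/-- additional conservation law for power-law entropy S(s) = A₀ s^q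
(on the domain s > 0). -/
theorem power_entropy_additional_conservation_law
    (n : ℕ) (hn : n ∈ ({0, 1, 2} : Set ℕ)) (γ : ℝ) (hγ : 1 < γ)
    (q : ℝ) (hq : q ≠ 0) (A₀ : ℝ) (hA₀ : 0 < A₀)
    (S : ℝ → ℝ) (hS : ∀ s : ℝ, 0 < s → S s = A₀ * s ^ q)
    (φ : ℝ → ℝ → ℝ) (hφ : ContDiff ℝ 2 (fun p : ℝ × ℝ => φ p.1 p.2))
    (hφpos : ∀ t s, 0 < s → 0 < φ t s) (hφspos : ∀ t s, 0 < s → 0 < pd2 φ t s)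
    (hsol : ∀ t s, 0 < s → gasEq n γ S φ t s = 0) :
    ∀ t s : ℝ, 0 < s →
      pd1 (fun t' s' =>
          -((((n : ℝ) + 3) * γ + 2 * q - (n : ℝ) - 1) * t')
              * ((1 / 2) * pd1 φ t' s' ^ 2
                  + (S s' / (γ - 1)) * φ t' s' ^ ((n : ℝ) * (1 - γ)) * pd2 φ t' s' ^ (1 - γ))
            - (((n : ℝ) + 1) * γ - (n : ℝ) - 3) * s' * pd2 φ t' s' * pd1 φ t' s'
            + (γ + q + 1) * φ t' s' * pd1 φ t' s') t s
        + pd2 (fun t' s' =>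
            -((((n : ℝ) + 3) * γ + 2 * q - (n : ℝ) - 1) * t')
                * S s' * φ t' s' ^ ((n : ℝ) * (1 - γ)) * pd1 φ t' s' * pd2 φ t' s' ^ (-γ)
              + (((n : ℝ) + 1) * γ - (n : ℝ) - 3) * s'
                  * ((1 / 2) * pd1 φ t' s' ^ 2
                      - (γ * S s' / (γ - 1)) * φ t' s' ^ ((n : ℝ) * (1 - γ)) * pd2 φ t' s' ^ (1 - γ))
              + (γ + q + 1) * S s' * φ t' s' ^ (-(n : ℝ) * γ + (n : ℝ) + 1) * pd2 φ t' s' ^ (-γ)) t s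
        = 0 := by
  intro t s hs
  have hu := hφpos t s hs
  have hus := hφspos t s hs
  have hu0 : φ t s ≠ 0 := ne_of_gt hu
  have hus0 : pd2 φ t s ≠ 0 := ne_of_gt hus
  have hs0 : s ≠ 0 := ne_of_gt hs
  have hγ0 : γ - 1 ≠ 0 := sub_ne_zero.mpr (ne_of_gt hγ)
  have h1 := hd_phi_t φ hφ t s
  have h2 := hd_pd1_t φ hφ t s
  have h3 := hd_pd2_t φ hφ t s
  have k1 := hd_phi_s φ hφ t s
  have k2 := hd_pd1_s φ hφ t s
  have k3 := hd_pd2_s φ hφ t s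
  have hSd : HasDerivAt S (A₀ * (q * s ^ (q - 1))) s := by
    have hm : HasDerivAt (fun x : ℝ => A₀ * x ^ q) (A₀ * (q * s ^ (q - 1))) s :=
      (Real.hasDerivAt_rpow_const (Or.inl hs0)).const_mul A₀
    exact hm.congr_of_eventuallyEq
      (by filter_upwards [Ioi_mem_nhds hs] with x hx using hS x hx)
  have p1 := h1.rpow_const (p := (n : ℝ) * (1 - γ)) (Or.inl hu0)
  have p2 := h3.rpow_const (p := 1 - γ) (Or.inl hus0)
  have sq := h2.pow 2
  have kpa := k1.rpow_const (p := (n : ℝ) * (1 - γ)) (Or.inl hu0)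
  have kpb := k3.rpow_const (p := -γ) (Or.inl hus0)
  have kpc := k3.rpow_const (p := 1 - γ) (Or.inl hus0)
  have kpd := k1.rpow_const (p := -(n : ℝ) * γ + (n : ℝ) + 1) (Or.inl hu0)
  have ksq := k2.pow 2
  have hγS := (hSd.const_mul γ).div_const (γ - 1)
  have hA := (((hasDerivAt_id' (x := t)).const_mul
      (((n : ℝ) + 3) * γ + 2 * q - (n : ℝ) - 1)).neg).mul
    ((sq.const_mul ((1:ℝ) / 2)).add ((p1.const_mul (S s / (γ - 1))).mul p2))
  have hB := (h3.const_mul ((((n : ℝ) + 1) * γ - (n : ℝ) - 3) * s)).mul h2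
  have hC := (h1.const_mul (γ + q + 1)).mul h2
  have hD := (hA.sub hB).add hC
  have hP := (((hSd.const_mul
      (-((((n : ℝ) + 3) * γ + 2 * q - (n : ℝ) - 1) * t))).mul kpa).mul k2).mul kpb
  have hQ := ((hasDerivAt_id' (x := s)).const_mul (((n : ℝ) + 1) * γ - (n : ℝ) - 3)).mul
    ((ksq.const_mul ((1:ℝ) / 2)).sub ((hγS.mul kpa).mul kpc))
  have hR := ((hSd.const_mul (γ + q + 1)).mul kpd).mul kpb
  have hE := (hP.add hQ).add hR
  show deriv (fun τ =>
      -((((n : ℝ) + 3) * γ + 2 * q - (n : ℝ) - 1) * τ)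
          * ((1 / 2) * pd1 φ τ s ^ 2
              + (S s / (γ - 1)) * φ τ s ^ ((n : ℝ) * (1 - γ)) * pd2 φ τ s ^ (1 - γ))
        - (((n : ℝ) + 1) * γ - (n : ℝ) - 3) * s * pd2 φ τ s * pd1 φ τ s
        + (γ + q + 1) * φ τ s * pd1 φ τ s) t
    + deriv (fun σ =>
        -((((n : ℝ) + 3) * γ + 2 * q - (n : ℝ) - 1) * t)
            * S σ * φ t σ ^ ((n : ℝ) * (1 - γ)) * pd1 φ t σ * pd2 φ t σ ^ (-γ)
          + (((n : ℝ) + 1) * γ - (n : ℝ) - 3) * σ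
              * ((1 / 2) * pd1 φ t σ ^ 2
                  - (γ * S σ / (γ - 1)) * φ t σ ^ ((n : ℝ) * (1 - γ)) * pd2 φ t σ ^ (1 - γ))
          + (γ + q + 1) * S σ * φ t σ ^ (-(n : ℝ) * γ + (n : ℝ) + 1) * pd2 φ t σ ^ (-γ)) s = 0
  erw [hD.deriv, hE.deriv]
  simp only [Pi.mul_apply, Pi.add_apply, Pi.sub_apply, Pi.neg_apply, Pi.pow_apply]
  have heq := hsol t s hs
  unfold gasEq at heq
  rw [hSd.deriv] at heq
  have hutt : pd1 (pd1 φ) t s = -(φ t s ^ ((n : ℝ) * (1 - γ)) * pd2 φ t s ^ (-γ) *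
      (A₀ * (q * s ^ (q - 1)) - (n : ℝ) * γ * S s * pd2 φ t s / φ t s
        - γ * S s * pd2 (pd2 φ) t s / pd2 φ t s)) := by linarith
  rw [hutt, hS s hs]
  have r1 : φ t s ^ ((n : ℝ) * (1 - γ) - 1) = φ t s ^ ((n : ℝ) * (1 - γ)) / φ t s := by
    rw [Real.rpow_sub hu, Real.rpow_one]
  have r2 : pd2 φ t s ^ (1 - γ - 1) = pd2 φ t s ^ (-γ) := by
    rw [show (1 - γ - 1) = -γ by ring]
  have r3 : pd2 φ t s ^ (1 - γ) = pd2 φ t s ^ (-γ) * pd2 φ t s := by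
    rw [show (1 - γ) = -γ + 1 by ring, Real.rpow_add hus, Real.rpow_one]
  have r4 : pd2 φ t s ^ (-γ - 1) = pd2 φ t s ^ (-γ) / pd2 φ t s := by
    rw [Real.rpow_sub hus, Real.rpow_one]
  have r5 : φ t s ^ (-(n : ℝ) * γ + (n : ℝ) + 1 - 1) = φ t s ^ ((n : ℝ) * (1 - γ)) := by
    rw [show (-(n : ℝ) * γ + (n : ℝ) + 1 - 1) = (n : ℝ) * (1 - γ) by ring]
  have r6 : φ t s ^ (-(n : ℝ) * γ + (n : ℝ) + 1) = φ t s ^ ((n : ℝ) * (1 - γ)) * φ t s := by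
    rw [show (-(n : ℝ) * γ + (n : ℝ) + 1) = (n : ℝ) * (1 - γ) + 1 by ring,
      Real.rpow_add hu, Real.rpow_one]
  have r7 : s ^ (q - 1) = s ^ q / s := by rw [Real.rpow_sub hs, Real.rpow_one]
  rw [r1, r2, r3, r4, r5, r6, r7]
  field_simp
  ring
end

section
/- Let n ∈ {0,1,2}, γ = (n+3)/(n+1), q = −2(n+2)/(n+1), A₀ > 0, and let the entropy be S(s) = A₀ s^q (on a domain where s > 0). If a C² function φ = φ(t,s) with φ > 0 and φ_s > 0 satisfies the Lagrangian gas dynamics equation φ_tt + φ^{n(1−γ)} φ_s^{−γ} ( S'(s) − nγ S(s) φ_s/φ − γ S(s) φ_ss/φ_s ) = 0 with this S, then the additional conservation law (from the variational symmetry t ∂_t + s ∂_s) holds: D_t[ −t ( (1/2)φ_t² + (S(s)/(γ−1)) φ^{n(1−γ)} φ_s^{1−γ} ) − s φ_s φ_t ] + D_s[ −t S(s) φ^{n(1−γ)} φ_t φ_s^{−γ} + s ( (1/2)φ_t² − (γ S(s)/(γ−1)) φ^{n(1−γ)} φ_s^{1−γ} ) ] = 0. -/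
set_option maxHeartbeats 4000000 in
/-- for γ = (n+3)/(n+1) and q = −2(n+2)/(n+1), with power-law entropy
S(s) = A₀ s^q, the additional conservation law from the variational symmetry
t ∂_t + s ∂_s. -/
theorem power_entropy_special_conservation_law
    (n : ℕ) (hn : n ∈ ({0, 1, 2} : Set ℕ))
    (γ : ℝ) (hγ : γ = ((n : ℝ) + 3) / ((n : ℝ) + 1))
    (q : ℝ) (hq : q = -2 * ((n : ℝ) + 2) / ((n : ℝ) + 1))
    (A₀ : ℝ) (hA₀ : 0 < A₀)
    (S : ℝ → ℝ) (hS : ∀ s : ℝ, 0 < s → S s = A₀ * s ^ q)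
    (φ : ℝ → ℝ → ℝ) (hφ : ContDiff ℝ 2 (fun p : ℝ × ℝ => φ p.1 p.2))
    (hφpos : ∀ t s, 0 < s → 0 < φ t s) (hφspos : ∀ t s, 0 < s → 0 < pd2 φ t s)
    (hsol : ∀ t s, 0 < s → gasEq n γ S φ t s = 0) :
    ∀ t s : ℝ, 0 < s →
      pd1 (fun t' s' =>
          -t' * ((1 / 2) * pd1 φ t' s' ^ 2
              + (S s' / (γ - 1)) * φ t' s' ^ ((n : ℝ) * (1 - γ)) * pd2 φ t' s' ^ (1 - γ))
            - s' * pd2 φ t' s' * pd1 φ t' s') t s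
        + pd2 (fun t' s' =>
            -t' * S s' * φ t' s' ^ ((n : ℝ) * (1 - γ)) * pd1 φ t' s' * pd2 φ t' s' ^ (-γ)
              + s' * ((1 / 2) * pd1 φ t' s' ^ 2
                  - (γ * S s' / (γ - 1)) * φ t' s' ^ ((n : ℝ) * (1 - γ)) * pd2 φ t' s' ^ (1 - γ))) t s
        = 0 := by
  intro t s hs
  -- arithmetic facts about γ and q
  have hn1 : (0:ℝ) < (n:ℝ) + 1 := by positivity
  have hγ1' : γ - 1 = 2 / ((n:ℝ) + 1) := by rw [hγ]; field_simp; ring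
  have hγ1 : γ - 1 ≠ 0 := by rw [hγ1']; positivity
  have hqγ : q = -1 - γ := by rw [hq, hγ]; field_simp; ring
  -- positivity
  have hP : 0 < φ t s := hφpos t s hs
  have hPs : 0 < pd2 φ t s := hφspos t s hs
  -- the uncurried function and its differentiability
  set f : ℝ × ℝ → ℝ := fun p => φ p.1 p.2 with hfdef
  have hfd : Differentiable ℝ f := hφ.differentiable (by norm_num)
  have hf' : ContDiff ℝ 1 (fderiv ℝ f) := hφ.fderiv_right (by norm_num)
  have key : ∀ (g : ℝ × ℝ → ℝ), Differentiable ℝ g → ∀ a b : ℝ,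
      HasDerivAt (fun τ => g (τ, b)) (fderiv ℝ g (a, b) (1, 0)) a ∧
      HasDerivAt (fun σ => g (a, σ)) (fderiv ℝ g (a, b) (0, 1)) b := by
    intro g hg a b
    constructor
    · have h1 : HasDerivAt (fun τ : ℝ => (τ, b)) ((1:ℝ), (0:ℝ)) a :=
        (hasDerivAt_id a).prodMk (hasDerivAt_const a b)
      exact (hg (a, b)).hasFDerivAt.comp_hasDerivAt a h1
    · have h1 : HasDerivAt (fun σ : ℝ => (a, σ)) ((0:ℝ), (1:ℝ)) b :=
        (hasDerivAt_const b a).prodMk (hasDerivAt_id b)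
      exact (hg (a, b)).hasFDerivAt.comp_hasDerivAt b h1
  have hF1 : Differentiable ℝ (fun p : ℝ × ℝ => fderiv ℝ f p (1, 0)) :=
    (hf'.clm_apply contDiff_const).differentiable (by norm_num)
  have hF2 : Differentiable ℝ (fun p : ℝ × ℝ => fderiv ℝ f p (0, 1)) :=
    (hf'.clm_apply contDiff_const).differentiable (by norm_num)
  have hA1 : HasDerivAt (fun τ => φ τ s) (pd1 φ t s) t := by
    have h := (key f hfd t s).1
    have e2 : pd1 φ t s = fderiv ℝ f (t, s) (1, 0) := h.deriv
    rw [e2]; exact h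
  have hA2 : HasDerivAt (fun σ => φ t σ) (pd2 φ t s) s := by
    have h := (key f hfd t s).2
    have e2 : pd2 φ t s = fderiv ℝ f (t, s) (0, 1) := h.deriv
    rw [e2]; exact h
  have epd1 : ∀ a b : ℝ, pd1 φ a b = (fun p : ℝ × ℝ => fderiv ℝ f p (1, 0)) (a, b) :=
    fun a b => ((key f hfd a b).1).deriv
  have epd2 : ∀ a b : ℝ, pd2 φ a b = (fun p : ℝ × ℝ => fderiv ℝ f p (0, 1)) (a, b) :=
    fun a b => ((key f hfd a b).2).deriv
  have hA3 : HasDerivAt (fun τ => pd1 φ τ s) (pd1 (pd1 φ) t s) t := by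
    have h := (key _ hF1 t s).1
    have e : (fun τ => pd1 φ τ s) = (fun τ => (fun p : ℝ × ℝ => fderiv ℝ f p (1, 0)) (τ, s)) :=
      funext fun τ => epd1 τ s
    have e2 : pd1 (pd1 φ) t s = fderiv ℝ (fun p : ℝ × ℝ => fderiv ℝ f p (1, 0)) (t, s) (1, 0) := by
      show deriv (fun τ => pd1 φ τ s) t = _
      rw [e]; exact h.deriv
    rw [e2, e]; exact h
  have hA4 : HasDerivAt (fun σ => pd1 φ t σ) (pd2 (pd1 φ) t s) s := by
    have h := (key _ hF1 t s).2
    have e : (fun σ => pd1 φ t σ) = (fun σ => (fun p : ℝ × ℝ => fderiv ℝ f p (1, 0)) (t, σ)) :=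
      funext fun σ => epd1 t σ
    have e2 : pd2 (pd1 φ) t s = fderiv ℝ (fun p : ℝ × ℝ => fderiv ℝ f p (1, 0)) (t, s) (0, 1) := by
      show deriv (fun σ => pd1 φ t σ) s = _
      rw [e]; exact h.deriv
    rw [e2, e]; exact h
  have hA5 : HasDerivAt (fun τ => pd2 φ τ s) (pd1 (pd2 φ) t s) t := by
    have h := (key _ hF2 t s).1
    have e : (fun τ => pd2 φ τ s) = (fun τ => (fun p : ℝ × ℝ => fderiv ℝ f p (0, 1)) (τ, s)) :=
      funext fun τ => epd2 τ s
    have e2 : pd1 (pd2 φ) t s = fderiv ℝ (fun p : ℝ × ℝ => fderiv ℝ f p (0, 1)) (t, s) (1, 0) := by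
      show deriv (fun τ => pd2 φ τ s) t = _
      rw [e]; exact h.deriv
    rw [e2, e]; exact h
  have hA6 : HasDerivAt (fun σ => pd2 φ t σ) (pd2 (pd2 φ) t s) s := by
    have h := (key _ hF2 t s).2
    have e : (fun σ => pd2 φ t σ) = (fun σ => (fun p : ℝ × ℝ => fderiv ℝ f p (0, 1)) (t, σ)) :=
      funext fun σ => epd2 t σ
    have e2 : pd2 (pd2 φ) t s = fderiv ℝ (fun p : ℝ × ℝ => fderiv ℝ f p (0, 1)) (t, s) (0, 1) := by
      show deriv (fun σ => pd2 φ t σ) s = _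
      rw [e]; exact h.deriv
    rw [e2, e]; exact h
  -- symmetry of second derivatives
  have h2d : DifferentiableAt ℝ (fderiv ℝ f) (t, s) := (hf'.differentiable (by norm_num)) (t, s)
  have hsf : IsSymmSndFDerivAt ℝ f (t, s) := hφ.contDiffAt.isSymmSndFDerivAt (by simp)
  have key5 : fderiv ℝ (fun p : ℝ × ℝ => fderiv ℝ f p (0, 1)) (t, s) (1, 0)
      = fderiv ℝ (fderiv ℝ f) (t, s) (1, 0) (0, 1) := by
    rw [fderiv_clm_apply h2d (differentiableAt_const _)]
    simp
  have key4 : fderiv ℝ (fun p : ℝ × ℝ => fderiv ℝ f p (1, 0)) (t, s) (0, 1)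
      = fderiv ℝ (fderiv ℝ f) (t, s) (0, 1) (1, 0) := by
    rw [fderiv_clm_apply h2d (differentiableAt_const _)]
    simp
  have hsymm : pd1 (pd2 φ) t s = pd2 (pd1 φ) t s := by
    have e5 : pd1 (pd2 φ) t s
        = fderiv ℝ (fun p : ℝ × ℝ => fderiv ℝ f p (0, 1)) (t, s) (1, 0) :=
      ((key _ hF2 t s).1.congr_of_eventuallyEq (by
        filter_upwards with τ using (epd2 τ s))).deriv
    have e4 : pd2 (pd1 φ) t s
        = fderiv ℝ (fun p : ℝ × ℝ => fderiv ℝ f p (1, 0)) (t, s) (0, 1) :=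
      ((key _ hF1 t s).2.congr_of_eventuallyEq (by
        filter_upwards with σ using (epd1 t σ))).deriv
    rw [e5, e4, key5, key4, hsf.eq]
  have hA5' : HasDerivAt (fun τ => pd2 φ τ s) (pd2 (pd1 φ) t s) t := hsymm ▸ hA5
  -- abbreviations
  set P := φ t s with hPdef
  set Pt := pd1 φ t s with hPtdef
  set Ps := pd2 φ t s with hPsdef
  set Ptt := pd1 (pd1 φ) t s with hPttdef
  set Pts := pd2 (pd1 φ) t s with hPtsdef
  set Pss := pd2 (pd2 φ) t s with hPssdef
  -- derivative of the first flux in t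
  have hg1 : HasDerivAt (fun τ =>
        -τ * ((1 / 2) * pd1 φ τ s ^ 2
            + (S s / (γ - 1)) * φ τ s ^ ((n : ℝ) * (1 - γ)) * pd2 φ τ s ^ (1 - γ))
          - s * pd2 φ τ s * pd1 φ τ s)
      (-((1/2) * Pt^2 + S s/(γ-1) * P ^ ((n:ℝ)*(1-γ)) * (Ps / Ps ^ γ))
        - t * (Pt * Ptt
            + S s/(γ-1) * ((n:ℝ)*(1-γ)) * (P ^ ((n:ℝ)*(1-γ)) / P) * Pt * (Ps / Ps ^ γ)
            + S s/(γ-1) * P ^ ((n:ℝ)*(1-γ)) * ((1-γ) * Pts * (Ps / Ps ^ γ) / Ps))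
        - s * (Pts * Pt + Ps * Ptt)) t := by
    have h := (((hasDerivAt_id t).neg.mul
        (((hA3.pow 2).const_mul ((1:ℝ)/2)).add
          (((hA1.rpow_const (p := (n:ℝ)*(1-γ)) (Or.inl hP.ne')).const_mul (S s / (γ - 1))).mul
            (hA5'.rpow_const (p := 1-γ) (Or.inl hPs.ne'))))).sub
        ((hA5'.const_mul s).mul hA3))
    refine h.congr_deriv ?_
    simp only [Pi.mul_apply, Pi.add_apply, Pi.sub_apply, Pi.pow_apply, Pi.neg_apply, id, ← hPdef, ← hPsdef, ← hPtdef]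
    simp only [Real.rpow_sub hPs, Real.rpow_sub hP, Real.rpow_one]
    field_simp
    ring
  -- derivative of the second flux in s, with S replaced by the power law
  have hCq : HasDerivAt (fun σ : ℝ => A₀ * σ ^ q) (A₀ * (q * s ^ (q - 1))) s :=
    (Real.hasDerivAt_rpow_const (p := q) (Or.inl hs.ne')).const_mul A₀
  have hg2' : HasDerivAt (fun σ =>
        -t * (A₀ * σ ^ q) * φ t σ ^ ((n : ℝ) * (1 - γ)) * pd1 φ t σ * pd2 φ t σ ^ (-γ)
          + σ * ((1 / 2) * pd1 φ t σ ^ 2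
              - (γ * (A₀ * σ ^ q) / (γ - 1)) * φ t σ ^ ((n : ℝ) * (1 - γ))
                  * pd2 φ t σ ^ (1 - γ)))
      (-t * ( A₀ * q * (s ^ q / s) * P ^ ((n:ℝ)*(1-γ)) * Pt / Ps ^ γ
          + A₀ * s ^ q * ((n:ℝ)*(1-γ)) * (P ^ ((n:ℝ)*(1-γ)) / P) * Ps * Pt / Ps ^ γ
          + A₀ * s ^ q * P ^ ((n:ℝ)*(1-γ)) * Pts / Ps ^ γ
          - A₀ * s ^ q * P ^ ((n:ℝ)*(1-γ)) * Pt * γ * Pss / (Ps ^ γ * Ps))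
        + ((1/2) * Pt ^ 2 - γ * (A₀ * s ^ q) / (γ - 1) * P ^ ((n:ℝ)*(1-γ)) * (Ps / Ps ^ γ))
        + s * ( Pt * Pts
          - γ * (A₀ * (q * (s ^ q / s))) / (γ - 1) * P ^ ((n:ℝ)*(1-γ)) * (Ps / Ps ^ γ)
          - γ * (A₀ * s ^ q) / (γ - 1) * ((n:ℝ)*(1-γ)) * (P ^ ((n:ℝ)*(1-γ)) / P) * Ps
              * (Ps / Ps ^ γ)
          - γ * (A₀ * s ^ q) / (γ - 1) * P ^ ((n:ℝ)*(1-γ)) * (1-γ) * Pss / Ps ^ γ)) s := by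
    have h := ((((hCq.const_mul (-t)).mul
          (hA2.rpow_const (p := (n:ℝ)*(1-γ)) (Or.inl hP.ne'))).mul hA4).mul
          (hA6.rpow_const (p := -γ) (Or.inl hPs.ne'))).add
        ((hasDerivAt_id s).mul
          (((hA4.pow 2).const_mul ((1:ℝ)/2)).sub
            ((((hCq.const_mul γ).div_const (γ-1)).mul
              (hA2.rpow_const (p := (n:ℝ)*(1-γ)) (Or.inl hP.ne'))).mul
              (hA6.rpow_const (p := 1-γ) (Or.inl hPs.ne')))))
    refine h.congr_deriv ?_
    simp only [Pi.mul_apply, Pi.add_apply, Pi.sub_apply, Pi.pow_apply, Pi.neg_apply, id, ← hPdef, ← hPsdef, ← hPtdef]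
    simp only [Real.rpow_sub hPs, Real.rpow_sub hP, Real.rpow_sub hs, Real.rpow_one,
      Real.rpow_neg hPs.le]
    field_simp
    ring
  -- the two flux functions agree near s
  have hEE : (fun σ =>
      -t * S σ * φ t σ ^ ((n : ℝ) * (1 - γ)) * pd1 φ t σ * pd2 φ t σ ^ (-γ)
        + σ * ((1 / 2) * pd1 φ t σ ^ 2
            - (γ * S σ / (γ - 1)) * φ t σ ^ ((n : ℝ) * (1 - γ)) * pd2 φ t σ ^ (1 - γ)))
      =ᶠ[nhds s] (fun σ =>
      -t * (A₀ * σ ^ q) * φ t σ ^ ((n : ℝ) * (1 - γ)) * pd1 φ t σ * pd2 φ t σ ^ (-γ)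
        + σ * ((1 / 2) * pd1 φ t σ ^ 2
            - (γ * (A₀ * σ ^ q) / (γ - 1)) * φ t σ ^ ((n : ℝ) * (1 - γ))
                * pd2 φ t σ ^ (1 - γ))) := by
    filter_upwards [eventually_gt_nhds hs] with σ hσ
    rw [hS σ hσ]
  -- derivative of the entropy
  have hSd : deriv S s = A₀ * (q * s ^ (q - 1)) :=
    (((Real.hasDerivAt_rpow_const (p := q) (Or.inl hs.ne')).const_mul A₀).congr_of_eventuallyEq
      (by filter_upwards [eventually_gt_nhds hs] with σ hσ using hS σ hσ)).deriv
  -- the PDE at (t, s)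
  have hE := hsol t s hs
  simp only [gasEq] at hE
  rw [hSd, hS s hs] at hE
  rw [← hPdef, ← hPsdef, ← hPttdef, ← hPssdef] at hE
  have hPtt : Ptt = -(P ^ ((n:ℝ)*(1-γ)) * Ps ^ (-γ) *
      (A₀ * (q * s ^ (q - 1)) - (n:ℝ) * γ * (A₀ * s ^ q) * Ps / P
        - γ * (A₀ * s ^ q) * Pss / Ps)) := by linarith [hE]
  -- assemble
  show deriv (fun τ =>
        -τ * ((1 / 2) * pd1 φ τ s ^ 2
            + (S s / (γ - 1)) * φ τ s ^ ((n : ℝ) * (1 - γ)) * pd2 φ τ s ^ (1 - γ))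
          - s * pd2 φ τ s * pd1 φ τ s) t
      + deriv (fun σ =>
        -t * S σ * φ t σ ^ ((n : ℝ) * (1 - γ)) * pd1 φ t σ * pd2 φ t σ ^ (-γ)
          + σ * ((1 / 2) * pd1 φ t σ ^ 2
              - (γ * S σ / (γ - 1)) * φ t σ ^ ((n : ℝ) * (1 - γ)) * pd2 φ t σ ^ (1 - γ))) s = 0
  rw [hg1.deriv, hEE.deriv_eq, hg2'.deriv, hS s hs, hPtt]
  simp only [Real.rpow_sub hPs, Real.rpow_sub hs, Real.rpow_one, Real.rpow_neg hPs.le]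
  rw [hqγ]
  field_simp
  ring
end

section
/- Let n ∈ {0,1,2}, γ > 1, q ≠ 0, A₀ > 0, and let the entropy be S(s) = A₀ e^{qs}. If a C² function φ = φ(t,s) with φ > 0 and φ_s > 0 satisfies the Lagrangian gas dynamics equation φ_tt + φ^{n(1−γ)} φ_s^{−γ} ( S'(s) − nγ S(s) φ_s/φ − γ S(s) φ_ss/φ_s ) = 0 with this S, then the additional conservation law holds: D_t[ −2q t ( (1/2)φ_t² + (S(s)/(γ−1)) φ^{n(1−γ)} φ_s^{1−γ} ) − ((n+1)γ−n−3) φ_s φ_t + q φ φ_t ] + D_s[ −2q t S(s) φ^{n(1−γ)} φ_t φ_s^{−γ} + ((n+1)γ−n−3) ( (1/2)φ_t² − (γ S(s)/(γ−1)) φ^{n(1−γ)} φ_s^{1−γ} ) + q S(s) φ^{−nγ+n+1} φ_s^{−γ} ] = 0. -/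
private theorem HasDerivAt.congr_d {f : ℝ → ℝ} {a b x : ℝ}
    (h : HasDerivAt f a x) (e : a = b) : HasDerivAt f b x := e ▸ h

set_option maxHeartbeats 2000000 in
/-- additional conservation law for exponential entropy S(s) = A₀ e^{qs}. -/
theorem exponential_entropy_additional_conservation_law
    (n : ℕ) (hn : n ∈ ({0, 1, 2} : Set ℕ)) (γ : ℝ) (hγ : 1 < γ)
    (q : ℝ) (hq : q ≠ 0) (A₀ : ℝ) (hA₀ : 0 < A₀)
    (S : ℝ → ℝ) (hS : S = fun s => A₀ * Real.exp (q * s))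
    (φ : ℝ → ℝ → ℝ) (hφ : ContDiff ℝ 2 (fun p : ℝ × ℝ => φ p.1 p.2))
    (hφpos : ∀ t s, 0 < φ t s) (hφspos : ∀ t s, 0 < pd2 φ t s)
    (hsol : ∀ t s, gasEq n γ S φ t s = 0) :
    ∀ t s : ℝ,
      pd1 (fun t' s' =>
          -(2 * q * t') * ((1 / 2) * pd1 φ t' s' ^ 2
              + (S s' / (γ - 1)) * φ t' s' ^ ((n : ℝ) * (1 - γ)) * pd2 φ t' s' ^ (1 - γ))
            - (((n : ℝ) + 1) * γ - (n : ℝ) - 3) * pd2 φ t' s' * pd1 φ t' s'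
            + q * φ t' s' * pd1 φ t' s') t s
        + pd2 (fun t' s' =>
            -(2 * q * t') * S s' * φ t' s' ^ ((n : ℝ) * (1 - γ)) * pd1 φ t' s' * pd2 φ t' s' ^ (-γ)
              + (((n : ℝ) + 1) * γ - (n : ℝ) - 3)
                  * ((1 / 2) * pd1 φ t' s' ^ 2
                      - (γ * S s' / (γ - 1)) * φ t' s' ^ ((n : ℝ) * (1 - γ)) * pd2 φ t' s' ^ (1 - γ))
              + q * S s' * φ t' s' ^ (-(n : ℝ) * γ + (n : ℝ) + 1) * pd2 φ t' s' ^ (-γ)) t s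
        = 0 := by
  intro t s
  have hγ0 : γ - 1 ≠ 0 := sub_ne_zero.2 (ne_of_gt hγ)
  have hu0 : φ t s ≠ 0 := ne_of_gt (hφpos t s)
  have hv0 : pd2 φ t s ≠ 0 := ne_of_gt (hφspos t s)
  -- entropy derivative
  have hSd : ∀ y : ℝ, HasDerivAt S (q * S y) y := by
    intro y
    rw [hS]
    exact (((hasDerivAt_id y).const_mul q).exp.const_mul A₀).congr_d
      (by simp only [id_eq]; ring)
  have hS0 : deriv S s = q * S s := (hSd s).deriv
  -- calculus setup
  set F : ℝ × ℝ → ℝ := fun p => φ p.1 p.2 with hFdef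
  have hFd : Differentiable ℝ F := hφ.differentiable (by norm_num)
  have hF1 : ContDiff ℝ 1 (fderiv ℝ F) := hφ.fderiv_right (by norm_num)
  have hF1d : Differentiable ℝ (fderiv ℝ F) := hF1.differentiable (by norm_num)
  have key1 : ∀ x y : ℝ, HasDerivAt (fun τ => φ τ y) (fderiv ℝ F (x, y) (1, 0)) x := by
    intro x y
    have hl : HasDerivAt (fun τ : ℝ => (τ, y)) ((1 : ℝ), (0 : ℝ)) x :=
      (hasDerivAt_id x).prodMk (hasDerivAt_const x y)
    exact (hFd (x, y)).hasFDerivAt.comp_hasDerivAt x hl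
  have key2 : ∀ x y : ℝ, HasDerivAt (fun σ => φ x σ) (fderiv ℝ F (x, y) (0, 1)) y := by
    intro x y
    have hl : HasDerivAt (fun σ : ℝ => (x, σ)) ((0 : ℝ), (1 : ℝ)) y :=
      (hasDerivAt_const y x).prodMk (hasDerivAt_id y)
    exact (hFd (x, y)).hasFDerivAt.comp_hasDerivAt y hl
  have hpd1 : ∀ x y : ℝ, pd1 φ x y = fderiv ℝ F (x, y) (1, 0) := fun x y => (key1 x y).deriv
  have hpd2 : ∀ x y : ℝ, pd2 φ x y = fderiv ℝ F (x, y) (0, 1) := fun x y => (key2 x y).deriv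
  have key3 : ∀ (v : ℝ × ℝ) (x y : ℝ), HasDerivAt (fun τ => fderiv ℝ F (τ, y) v)
      (fderiv ℝ (fderiv ℝ F) (x, y) (1, 0) v) x := by
    intro v x y
    have h : HasFDerivAt (fun z => fderiv ℝ F z v)
        ((ContinuousLinearMap.apply ℝ ℝ v).comp (fderiv ℝ (fderiv ℝ F) (x, y))) (x, y) :=
      (ContinuousLinearMap.apply ℝ ℝ v).hasFDerivAt.comp (x, y) (hF1d (x, y)).hasFDerivAt
    have hl : HasDerivAt (fun τ : ℝ => (τ, y)) ((1 : ℝ), (0 : ℝ)) x :=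
      (hasDerivAt_id x).prodMk (hasDerivAt_const x y)
    simpa [Function.comp_def] using h.comp_hasDerivAt x hl
  have key4 : ∀ (v : ℝ × ℝ) (x y : ℝ), HasDerivAt (fun σ => fderiv ℝ F (x, σ) v)
      (fderiv ℝ (fderiv ℝ F) (x, y) (0, 1) v) y := by
    intro v x y
    have h : HasFDerivAt (fun z => fderiv ℝ F z v)
        ((ContinuousLinearMap.apply ℝ ℝ v).comp (fderiv ℝ (fderiv ℝ F) (x, y))) (x, y) :=
      (ContinuousLinearMap.apply ℝ ℝ v).hasFDerivAt.comp (x, y) (hF1d (x, y)).hasFDerivAt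
    have hl : HasDerivAt (fun σ : ℝ => (x, σ)) ((0 : ℝ), (1 : ℝ)) y :=
      (hasDerivAt_const y x).prodMk (hasDerivAt_id y)
    simpa [Function.comp_def] using h.comp_hasDerivAt y hl
  have hsym : fderiv ℝ (fderiv ℝ F) (t, s) (1, 0) (0, 1)
      = fderiv ℝ (fderiv ℝ F) (t, s) (0, 1) (1, 0) :=
    second_derivative_symmetric (fun y => (hFd y).hasFDerivAt) ((hF1d (t, s)).hasFDerivAt) _ _
  -- first-order derivatives at (t, s)
  have hu_t : HasDerivAt (fun τ => φ τ s) (pd1 φ t s) t := by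
    rw [hpd1 t s]; exact key1 t s
  have hu_s : HasDerivAt (fun σ => φ t σ) (pd2 φ t s) s := by
    rw [hpd2 t s]; exact key2 t s
  -- second-order derivatives at (t, s)
  have hp1_t : HasDerivAt (fun τ => pd1 φ τ s) (fderiv ℝ (fderiv ℝ F) (t, s) (1, 0) (1, 0)) t := by
    have he : (fun τ => pd1 φ τ s) = fun τ => fderiv ℝ F (τ, s) (1, 0) :=
      funext fun τ => hpd1 τ s
    rw [he]; exact key3 _ t s
  have hp2_t : HasDerivAt (fun τ => pd2 φ τ s) (fderiv ℝ (fderiv ℝ F) (t, s) (1, 0) (0, 1)) t := by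
    have he : (fun τ => pd2 φ τ s) = fun τ => fderiv ℝ F (τ, s) (0, 1) :=
      funext fun τ => hpd2 τ s
    rw [he]; exact key3 _ t s
  have hp1_s : HasDerivAt (fun σ => pd1 φ t σ) (fderiv ℝ (fderiv ℝ F) (t, s) (1, 0) (0, 1)) s := by
    have he : (fun σ => pd1 φ t σ) = fun σ => fderiv ℝ F (t, σ) (1, 0) :=
      funext fun σ => hpd1 t σ
    rw [he, hsym]; exact key4 _ t s
  have hp2_s : HasDerivAt (fun σ => pd2 φ t σ) (fderiv ℝ (fderiv ℝ F) (t, s) (0, 1) (0, 1)) s := by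
    have he : (fun σ => pd2 φ t σ) = fun σ => fderiv ℝ F (t, σ) (0, 1) :=
      funext fun σ => hpd2 t σ
    rw [he]; exact key4 _ t s
  -- derivative of the first flux component in t
  have hA1 := ((hasDerivAt_id t).const_mul (2*q)).neg
  have hB1 := ((hp1_t.pow (n := 2)).const_mul ((1:ℝ)/2)).add
    (((hu_t.rpow_const (p := (n:ℝ)*(1-γ)) (Or.inl hu0)).const_mul (S s/(γ-1))).mul
      (hp2_t.rpow_const (p := 1-γ) (Or.inl hv0)))
  have hC1 := (hp2_t.const_mul (((n:ℝ)+1)*γ-(n:ℝ)-3)).mul hp1_t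
  have hD1 := (hu_t.const_mul q).mul hp1_t
  have hd1 := ((hA1.mul hB1).sub hC1).add hD1
  have e1 : pd1 (fun t' s' =>
          -(2 * q * t') * ((1 / 2) * pd1 φ t' s' ^ 2
              + (S s' / (γ - 1)) * φ t' s' ^ ((n : ℝ) * (1 - γ)) * pd2 φ t' s' ^ (1 - γ))
            - (((n : ℝ) + 1) * γ - (n : ℝ) - 3) * pd2 φ t' s' * pd1 φ t' s'
            + q * φ t' s' * pd1 φ t' s') t s = _ := hd1.deriv
  -- derivative of the second flux component in s
  have hA2 := ((((hSd s).const_mul (-(2*q*t))).mul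
      (hu_s.rpow_const (p := (n:ℝ)*(1-γ)) (Or.inl hu0))).mul hp1_s).mul
      (hp2_s.rpow_const (p := -γ) (Or.inl hv0))
  have hB2 := ((((hp1_s.pow (n := 2)).const_mul ((1:ℝ)/2)).sub
      (((((hSd s).const_mul γ).div_const (γ-1)).mul
          (hu_s.rpow_const (p := (n:ℝ)*(1-γ)) (Or.inl hu0))).mul
        (hp2_s.rpow_const (p := 1-γ) (Or.inl hv0))))).const_mul (((n:ℝ)+1)*γ-(n:ℝ)-3)
  have hC2 := (((hSd s).const_mul q).mul
      (hu_s.rpow_const (p := -(n:ℝ)*γ+(n:ℝ)+1) (Or.inl hu0))).mul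
      (hp2_s.rpow_const (p := -γ) (Or.inl hv0))
  have hd2 := (hA2.add hB2).add hC2
  have e2 : pd2 (fun t' s' =>
            -(2 * q * t') * S s' * φ t' s' ^ ((n : ℝ) * (1 - γ)) * pd1 φ t' s' * pd2 φ t' s' ^ (-γ)
              + (((n : ℝ) + 1) * γ - (n : ℝ) - 3)
                  * ((1 / 2) * pd1 φ t' s' ^ 2
                      - (γ * S s' / (γ - 1)) * φ t' s' ^ ((n : ℝ) * (1 - γ)) * pd2 φ t' s' ^ (1 - γ))
              + q * S s' * φ t' s' ^ (-(n : ℝ) * γ + (n : ℝ) + 1) * pd2 φ t' s' ^ (-γ)) t s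
        = _ := hd2.deriv
  rw [e1, e2]
  -- the PDE at (t, s)
  have eA : pd1 (pd1 φ) t s = fderiv ℝ (fderiv ℝ F) (t, s) (1, 0) (1, 0) := hp1_t.deriv
  have eB : pd2 (pd2 φ) t s = fderiv ℝ (fderiv ℝ F) (t, s) (0, 1) (0, 1) := hp2_s.deriv
  have hP := hsol t s
  rw [gasEq, eA, eB, hS0] at hP
  have hH11 : fderiv ℝ (fderiv ℝ F) (t, s) (1, 0) (1, 0)
      = -(φ t s ^ ((n : ℝ) * (1 - γ)) * pd2 φ t s ^ (-γ) *
          (q * S s - (n : ℝ) * γ * S s * pd2 φ t s / φ t s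
            - γ * S s * fderiv ℝ (fderiv ℝ F) (t, s) (0, 1) (0, 1) / pd2 φ t s)) :=
    eq_neg_of_add_eq_zero_left hP
  -- rpow normalizations
  have r1 : φ t s ^ ((n:ℝ)*(1-γ) - 1) = φ t s ^ ((n:ℝ)*(1-γ)) / φ t s := by
    rw [Real.rpow_sub (hφpos t s), Real.rpow_one]
  have r2 : φ t s ^ (-(n:ℝ)*γ + (n:ℝ) + 1) = φ t s ^ ((n:ℝ)*(1-γ)) * φ t s := by
    rw [show -(n:ℝ)*γ + (n:ℝ) + 1 = (n:ℝ)*(1-γ) + 1 by ring, Real.rpow_add_one hu0]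
  have r3 : φ t s ^ (-(n:ℝ)*γ + (n:ℝ) + 1 - 1) = φ t s ^ ((n:ℝ)*(1-γ)) := by
    rw [show -(n:ℝ)*γ + (n:ℝ) + 1 - 1 = (n:ℝ)*(1-γ) by ring]
  have r4 : pd2 φ t s ^ (1 - γ) = pd2 φ t s ^ (-γ) * pd2 φ t s := by
    rw [show (1:ℝ) - γ = -γ + 1 by ring, Real.rpow_add_one hv0]
  have r5 : pd2 φ t s ^ (1 - γ - 1) = pd2 φ t s ^ (-γ) := by
    rw [show (1:ℝ) - γ - 1 = -γ by ring]
  have r6 : pd2 φ t s ^ (-γ - 1) = pd2 φ t s ^ (-γ) / pd2 φ t s := by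
    rw [Real.rpow_sub (hφspos t s), Real.rpow_one]
  simp only [id_eq, Pi.add_apply, Pi.sub_apply, Pi.mul_apply, Pi.neg_apply, Pi.pow_apply, r1, r2, r3, r4, r5, r6, hH11]
  field_simp
  ring
end
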